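/- Let I be an arbitrary link set and let x be an original node of T/I lying in X. Let e = a'x ∈ F where a' is a node of T/I, and suppose the original endpoint a of e contained in a' (possibly a = a') is a locked leaf. Then a' lies in T_x (the subtree of T/I rooted at x), and there is a link xz ∈ F with z ∉ T_x such that z is not a locked leaf (so x has a ticket for the link xz). -/
import Mathlib


open scoped Classical

namespace TAP

/-- A rooted tree on vertex set `V`, given by a parent function. -/
structure Tree (V : Type) where
  root : V
  parent : V → V
  parent_root : parent root = root
  reach : ∀ v, ∃ n, parent^[n] v = root

namespace Tree

variable {V : Type} (t : Tree V)

/-- `t.desc w v` : `v` lies in the rooted subtree `T_w`, i.e. `w` is an ancestor of `v` or `w = v`. -/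
def desc (w v : V) : Prop := ∃ n, t.parent^[n] v = w

/-- The depth of a node (its distance to the root). -/
noncomputable def depth (v : V) : ℕ :=
  @Nat.find (fun n => t.parent^[n] v = t.root) (Classical.decPred _) (t.reach v)

/-- `v` is a leaf of the tree: it is not the root and it has no children. -/
def IsLeaf (v : V) : Prop := v ≠ t.root ∧ ∀ u, u ≠ v → t.parent u ≠ v

/-- The tree edge `(w, parent w)` (for `w ≠ root`) lies on the tree path `P(u,v)`. -/
def onPath (w u v : V) : Prop :=
  (t.desc w u ∧ ¬ t.desc w v) ∨ (t.desc w v ∧ ¬ t.desc w u)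

/-- The node `c` lies on the tree path `P(u,v)`. -/
def onPathNode (c u v : V) : Prop :=
  (t.desc c u ∨ t.desc c v) ∧ ∀ w, t.desc w u → t.desc w v → t.desc w c

/-- `u` is the least common ancestor of `a` and `b`. -/
def IsLCA (u a b : V) : Prop :=
  t.desc u a ∧ t.desc u b ∧ ∀ w, t.desc w a → t.desc w b → t.desc w u

end Tree

variable {V : Type} [Fintype V] [DecidableEq V]

/-- The link `e` covers the tree edge `(w, parent w)`. -/
def covers (t : Tree V) (e : Sym2 V) (w : V) : Prop :=
  ∃ u v, e = s(u, v) ∧ t.onPath w u v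

/-- Some link of `F` covers the tree edge `(w, parent w)`. -/
def coveredBy (t : Tree V) (F : Finset (Sym2 V)) (w : V) : Prop :=
  ∃ e ∈ F, covers t e w

/-- `F` covers the tree: every tree edge is covered by some link of `F`
(equivalently, `T ∪ F` is 2-edge-connected). -/
def IsCover (t : Tree V) (F : Finset (Sym2 V)) : Prop :=
  ∀ w, w ≠ t.root → coveredBy t F w

/-- `e'` is a shadow of `e`, i.e. `P(e') ⊆ P(e)`. -/
def Shadow (t : Tree V) (e' e : Sym2 V) : Prop := ∀ w, covers t e' w → covers t e w

/-- `e'` is a proper shadow of `e`. -/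
def ProperShadow (t : Tree V) (e' e : Sym2 V) : Prop :=
  Shadow t e' e ∧ ∃ w, covers t e w ∧ ¬ covers t e' w

/-- The link set `E` is closed under shadows. -/
def ShadowClosed (t : Tree V) (E : Finset (Sym2 V)) : Prop :=
  ∀ e ∈ E, ∀ e' : Sym2 V, ¬ e'.IsDiag → Shadow t e' e → e' ∈ E

/-- `F` is an (inclusion-minimal) shadows-minimal cover: replacing any link of `F` by a
proper shadow of it destroys the covering property. -/
def ShadowsMinimal (t : Tree V) (F : Finset (Sym2 V)) : Prop :=
  IsCover t F ∧ (∀ e ∈ F, ¬ IsCover t (F.erase e)) ∧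
  ∀ e ∈ F, ∀ e' : Sym2 V, ProperShadow t e' e → ¬ IsCover t (insert e' (F.erase e))

/-- `deg Y x` : the number of links of `Y` incident to `x`. -/
noncomputable def deg (Y : Finset (Sym2 V)) (x : V) : ℕ := (Y.filter (fun e => x ∈ e)).card

/-! ### Contraction of a set of links -/

/-- `u` and `v` lie in the same 2-edge-connected component of `T ∪ I`,
i.e. they get identified in `T/I`. -/
def rel (t : Tree V) (I : Finset (Sym2 V)) (u v : V) : Prop :=
  ∀ w, w ≠ t.root → t.onPath w u v → coveredBy t I w

def relSetoid (t : Tree V) (I : Finset (Sym2 V)) : Setoid V where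
  r := rel t I
  iseqv := by
    refine ⟨?_, ?_, ?_⟩
    · intro u w _ hp
      rcases hp with ⟨h1, h2⟩ | ⟨h1, h2⟩ <;> exact absurd h1 h2
    · intro u v h w hw hp
      refine h w hw ?_
      rcases hp with ⟨h1, h2⟩ | ⟨h1, h2⟩
      · exact Or.inr ⟨h1, h2⟩
      · exact Or.inl ⟨h1, h2⟩
    · intro u v x h1 h2 w hw hp
      by_cases hv : t.desc w v
      · rcases hp with ⟨ha, hb⟩ | ⟨ha, hb⟩
        · exact h2 w hw (Or.inl ⟨hv, hb⟩)
        · exact h1 w hw (Or.inr ⟨hv, hb⟩)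
      · rcases hp with ⟨ha, hb⟩ | ⟨ha, hb⟩
        · exact h1 w hw (Or.inl ⟨ha, hv⟩)
        · exact h2 w hw (Or.inr ⟨ha, hv⟩)

/-- The node set of the contracted tree `T/I`. -/
abbrev QT (t : Tree V) (I : Finset (Sym2 V)) : Type := Quotient (relSetoid t I)

noncomputable instance instFintypeQT (t : Tree V) (I : Finset (Sym2 V)) : Fintype (QT t I) :=
  @Quotient.fintype V _ (relSetoid t I) (Classical.decRel _)

/-- The node of `T/I` corresponding to the node `x` of `T`. -/
def qm (t : Tree V) (I : Finset (Sym2 V)) (x : V) : QT t I := Quotient.mk (relSetoid t I) x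

/-- The class of `u` is a (possibly compound) leaf of `T/I`. -/
def qleafRep (t : Tree V) (I : Finset (Sym2 V)) (u : V) : Prop :=
  ¬ rel t I u t.root ∧ ∀ v, rel t I (t.parent v) u → rel t I v u

/-- The class of `u` lies in the rooted subtree of `T/I` rooted at the class of `v`. -/
def qdescRep (t : Tree V) (I : Finset (Sym2 V)) (v u : V) : Prop :=
  ∃ w, t.desc w u ∧ rel t I w v

/-- The class of `u` is a compound node of `T/I` (a contracted component, or the root). -/
def qcompoundRep (t : Tree V) (I : Finset (Sym2 V)) (u : V) : Prop :=
  (∃ w, w ≠ u ∧ rel t I u w) ∨ rel t I u t.root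

/-- The node `x` of `T` lies in the rooted subtree of `T/I` whose root is the class `c`. -/
def inT (t : Tree V) (I : Finset (Sym2 V)) (c : QT t I) (x : V) : Prop :=
  qdescRep t I c.out x

/-- The node `d` of `T/I` lies in the rooted subtree of `T/I` whose root is `c`. -/
def below (t : Tree V) (I : Finset (Sym2 V)) (c d : QT t I) : Prop := inT t I c d.out

/-- The class of `x` is matched by the matching `M`. -/
def matchedRep (t : Tree V) (I M : Finset (Sym2 V)) (x : V) : Prop :=
  ∃ e ∈ M, ∃ z, z ∈ e ∧ rel t I z x

/-- The class of `x` lies on the path of `T/I` between the classes of `u` and of `v`. -/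
def qOnPathNode (t : Tree V) (I : Finset (Sym2 V)) (x u v : V) : Prop :=
  (qdescRep t I x u ∨ qdescRep t I x v) ∧
  ∀ w, qdescRep t I w u → qdescRep t I w v → qdescRep t I w x

/-- The class of `x` is the least common ancestor in `T/I` of the classes of `a` and `b`. -/
def qIsLCA (t : Tree V) (I : Finset (Sym2 V)) (x a b : V) : Prop :=
  qdescRep t I x a ∧ qdescRep t I x b ∧
  ∀ w, qdescRep t I w a → qdescRep t I w b → qdescRep t I w x

/-- Depth of the class of `x` in `T/I`. -/
noncomputable def qdepth (t : Tree V) (I : Finset (Sym2 V)) (x : V) : ℕ :=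
  (Finset.univ.filter (fun w => w ≠ t.root ∧ ¬ coveredBy t I w ∧ t.desc w x)).card

/-- `u` is an up-node of (the class of) `a` in `T/I` : among all links of `E` leaving the
class of `a`, some link from the class of `a` to `u` has its other end as close as possible
to the root. -/
def qUpNode (t : Tree V) (I E : Finset (Sym2 V)) (a u : V) : Prop :=
  (∃ b, rel t I b a ∧ s(b, u) ∈ E) ∧ ¬ rel t I u a ∧
  ∀ b x, rel t I b a → s(b, x) ∈ E → ¬ rel t I x a → qdepth t I u ≤ qdepth t I x

/-- `s(a,b)` is a twin link of `T/I` : a link of `E` between two distinct leaves of `T/I`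
whose contraction results in a new leaf. -/
def qTwinAt (t : Tree V) (I E : Finset (Sym2 V)) (a b : V) : Prop :=
  qleafRep t I a ∧ qleafRep t I b ∧ ¬ rel t I a b ∧ s(a, b) ∈ E ∧
  qleafRep t (insert (s(a, b)) I) a

/-- The class of `x` is a stem of `T/I` : the least common ancestor of the two ends
of a twin link. -/
def qStem (t : Tree V) (I E : Finset (Sym2 V)) (x : V) : Prop :=
  ∃ a b, qTwinAt t I E a b ∧ qIsLCA t I x a b

/-! ### Twin links, stems, up-links and locked leaves in the original tree -/

/-- `a` and `b` are twins: two leaves such that the contraction of the link `ab`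
results in a new leaf. -/
def TwinPair (t : Tree V) (a b : V) : Prop :=
  t.IsLeaf a ∧ t.IsLeaf b ∧ a ≠ b ∧ qleafRep t {s(a, b)} a

/-- `e` is a twin link. -/
def IsTwinLinkE (t : Tree V) (e : Sym2 V) : Prop := ∃ a b, e = s(a, b) ∧ TwinPair t a b

/-- `x` is a stem: the least common ancestor of two twins. -/
def IsStem (t : Tree V) (E : Finset (Sym2 V)) (x : V) : Prop :=
  ∃ a b, TwinPair t a b ∧ s(a, b) ∈ E ∧ t.IsLCA x a b

noncomputable def stems (t : Tree V) (E : Finset (Sym2 V)) : Finset V :=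
  Finset.univ.filter (IsStem t E)

/-- `X = V \ (L ∪ S)`. -/
noncomputable def Xset (t : Tree V) (E : Finset (Sym2 V)) : Finset V :=
  Finset.univ.filter (fun x => ¬ t.IsLeaf x ∧ ¬ IsStem t E x)

/-- `s(a,u)` is the up-link of `a` : among all links of `E` at `a`, its other end `u` is
as close as possible to the root (`u` is the up-node of `a`). -/
def IsUpLink (t : Tree V) (E : Finset (Sym2 V)) (a u : V) : Prop :=
  s(a, u) ∈ E ∧ ∀ x, s(a, x) ∈ E → t.depth u ≤ t.depth x

/-- The rooted subtree `T_v` is `a`-closed: it contains the up-node of `a`. -/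
def AClosed (t : Tree V) (E : Finset (Sym2 V)) (v a : V) : Prop :=
  ∀ u, IsUpLink t E a u → t.desc v u

/-- The rooted proper subtree `T_v` witnesses that the leaf `a` is locked by the link `bb'` :
`L(T_v) = {a,b,b'}`, `ab` is a twin link and `T_v` is `a`-closed. -/
def LocksAt (t : Tree V) (E : Finset (Sym2 V)) (b b' a v : V) : Prop :=
  v ≠ t.root ∧ s(b, b') ∈ E ∧ b ≠ b' ∧ b' ≠ a ∧
  {x | t.IsLeaf x ∧ t.desc v x} = {a, b, b'} ∧
  TwinPair t a b ∧ s(a, b) ∈ E ∧ AClosed t E v a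

/-- The leaf `a` is locked by the link `bb'`. -/
def Locks (t : Tree V) (E : Finset (Sym2 V)) (b b' a : V) : Prop :=
  ∃ v, LocksAt t E b b' a v

def IsLockedLeaf (t : Tree V) (E : Finset (Sym2 V)) (a : V) : Prop :=
  ∃ b b', Locks t E b b' a

def IsLockingLink (t : Tree V) (E : Finset (Sym2 V)) (e : Sym2 V) : Prop :=
  ∃ b b' a, e = s(b, b') ∧ Locks t E b b' a

/-- `T_v` is the locking tree of `a` (with locking link `bb'`): the minimal rooted subtree
witnessing the lock. -/
def IsLockingTree (t : Tree V) (E : Finset (Sym2 V)) (a b b' v : V) : Prop :=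
  LocksAt t E b b' a v ∧ ∀ v', LocksAt t E b b' a v' → t.desc v' v

/-! ### The fixed optimal cover `F` -/

noncomputable def twinCount (t : Tree V) (F : Finset (Sym2 V)) : ℕ :=
  (F.filter (fun e => IsTwinLinkE t e)).card

/-- `F` is an optimal (minimum-size) shadows-minimal cover of `T` with the maximum
number of twin links. -/
def IsGoodCover (t : Tree V) (E F : Finset (Sym2 V)) : Prop :=
  F ⊆ E ∧ ShadowsMinimal t F ∧
  (∀ F' : Finset (Sym2 V), F' ⊆ E → IsCover t F' → F.card ≤ F'.card) ∧
  (∀ F' : Finset (Sym2 V), F' ⊆ E → ShadowsMinimal t F' → F'.card = F.card →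
    twinCount t F' ≤ twinCount t F)

/-! ### Matchings and the lower bound -/

def IsMatching (M : Finset (Sym2 V)) : Prop :=
  (∀ e ∈ M, ¬ e.IsDiag) ∧ ∀ e ∈ M, ∀ f ∈ M, e ≠ f → ∀ x, x ∈ e → x ∉ f

/-- `E(L,L)` : the links of `E` joining two leaves. -/
noncomputable def leafLinks (t : Tree V) (E : Finset (Sym2 V)) : Finset (Sym2 V) :=
  E.filter (fun e => ∀ x ∈ e, t.IsLeaf x)

/-- `W` : the set of twin links and locking links. -/
noncomputable def Wlinks (t : Tree V) (E : Finset (Sym2 V)) : Finset (Sym2 V) :=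
  E.filter (fun e => IsTwinLinkE t e ∨ IsLockingLink t E e)

/-- `M` is a maximum matching in `E(L,L) \ W`. -/
def IsMaxLeafMatching (t : Tree V) (E M : Finset (Sym2 V)) : Prop :=
  M ⊆ leafLinks t E \ Wlinks t E ∧ IsMatching M ∧
  ∀ M' : Finset (Sym2 V), M' ⊆ leafLinks t E \ Wlinks t E → IsMatching M' → M'.card ≤ M.card

/-- `U` : the set of leaves unmatched by `M`. -/
noncomputable def unmatchedLeaves (t : Tree V) (M : Finset (Sym2 V)) : Finset V :=
  Finset.univ.filter (fun a => t.IsLeaf a ∧ ∀ e ∈ M, a ∉ e)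

/-- `M_F = F(L,L) \ W`. -/
noncomputable def MFlinks (t : Tree V) (E F : Finset (Sym2 V)) : Finset (Sym2 V) :=
  (F.filter (fun e => ∀ x ∈ e, t.IsLeaf x)) \ Wlinks t E

/-- `N = {bb' ∈ M : each of b, b' is unmatched by M_F}`. -/
noncomputable def Nlinks (t : Tree V) (E F M : Finset (Sym2 V)) : Finset (Sym2 V) :=
  M.filter (fun e => ∀ b ∈ e, ∀ f ∈ MFlinks t E F, b ∉ f)

/-- `J` : the set of links of `F` not incident to a locked leaf. -/
noncomputable def Jlinks (t : Tree V) (E F : Finset (Sym2 V)) : Finset (Sym2 V) :=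
  F.filter (fun e => ∀ x ∈ e, ¬ IsLockedLeaf t E x)

/-- The lower bound `(3/2)|M| + |U| + (1/2)|N| + (1/2) Σ_{x ∈ X} d_J(x)`. -/
noncomputable def LB (t : Tree V) (E F M : Finset (Sym2 V)) : ℚ :=
  (3 / 2 : ℚ) * (M.card : ℚ) + ((unmatchedLeaves t M).card : ℚ)
    + (1 / 2 : ℚ) * ((Nlinks t E F M).card : ℚ)
    + (1 / 2 : ℚ) * ∑ x ∈ Xset t E, (deg (Jlinks t E F) x : ℚ)

/-! ### Subtrees of `T/I`, semi-closed trees, credits -/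

/-- `T'` (the rooted subtree of `T/I` with root `c`) is `M`-compatible. -/
def MCompatible (t : Tree V) (I M : Finset (Sym2 V)) (c : QT t I) : Prop :=
  ∀ e ∈ M, (∀ x ∈ e, inT t I c x) ∨ (∀ x ∈ e, ¬ inT t I c x)

/-- `T'` is semi-closed (w.r.t. `M`): `M`-compatible and closed w.r.t. its unmatched leaves. -/
def SemiClosedQ (t : Tree V) (I E M : Finset (Sym2 V)) (c : QT t I) : Prop :=
  MCompatible t I M c ∧
  ∀ x y, s(x, y) ∈ E → inT t I c x → qleafRep t I x → ¬ matchedRep t I M x → inT t I c y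

/-- `T'` is minimally semi-closed. -/
def MinSemiClosedQ (t : Tree V) (I E M : Finset (Sym2 V)) (c : QT t I) : Prop :=
  SemiClosedQ t I E M c ∧
  ∀ c' : QT t I, below t I c c' → c' ≠ c → ¬ SemiClosedQ t I E M c'

/-- `I'` is an exact cover of `T'` : the set of edges of `T/I` covered by `I'` is exactly
the edge set of `T'`. -/
def IsExactCoverQ (t : Tree V) (I : Finset (Sym2 V)) (c : QT t I) (I' : Finset (Sym2 V)) : Prop :=
  ∀ w, w ≠ t.root → ¬ coveredBy t I w → (coveredBy t I' w ↔ inT t I c (t.parent w))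

/-- `up(U')` : the set of up-links of the unmatched leaves of `T'`. -/
noncomputable def upOfQ (t : Tree V) (I E M : Finset (Sym2 V)) (c : QT t I) :
    Finset (Sym2 V) :=
  E.filter (fun e => ∃ a u, e = s(a, u) ∧ inT t I c a ∧ qleafRep t I a ∧
    ¬ matchedRep t I M a ∧ qUpNode t I E a u)

/-- `M` is a matching on the leaves of `T/I`. -/
def IsLeafMatchingQ (t : Tree V) (I M : Finset (Sym2 V)) : Prop :=
  (∀ e ∈ M, ∃ a b, e = s(a, b) ∧ qleafRep t I a ∧ qleafRep t I b ∧ ¬ rel t I a b) ∧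
  ∀ e ∈ M, ∀ f ∈ M, e ≠ f → ∀ x, x ∈ e → ∀ y, y ∈ f → ¬ rel t I x y

/-- `L' = L(T')` as a set of nodes of `T/I`. -/
noncomputable def LsetQ (t : Tree V) (I : Finset (Sym2 V)) (c : QT t I) : Finset (QT t I) :=
  Finset.univ.filter (fun d => below t I c d ∧ qleafRep t I d.out)

/-- `U'` : the `M`-unmatched leaves of `T'`. -/
noncomputable def UsetQ (t : Tree V) (I M : Finset (Sym2 V)) (c : QT t I) : Finset (QT t I) :=
  Finset.univ.filter
    (fun d => below t I c d ∧ qleafRep t I d.out ∧ ¬ matchedRep t I M d.out)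

/-- `C'` : the non-leaf compound nodes of `T'`. -/
noncomputable def CsetQ (t : Tree V) (I : Finset (Sym2 V)) (c : QT t I) : Finset (QT t I) :=
  Finset.univ.filter
    (fun d => below t I c d ∧ qcompoundRep t I d.out ∧ ¬ qleafRep t I d.out)

/-- `M' = M(T')` : the links of `M` with both ends in `T'`. -/
noncomputable def MlinksQ (t : Tree V) (I M : Finset (Sym2 V)) (c : QT t I) :
    Finset (Sym2 V) :=
  M.filter (fun e => ∀ x ∈ e, inT t I c x)

/-- `S'` : the stems of `T'`. -/
noncomputable def SsetQ (t : Tree V) (I E : Finset (Sym2 V)) (c : QT t I) : Finset (QT t I) :=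
  Finset.univ.filter (fun d => below t I c d ∧ qStem t I E d.out)

/-- `S'_1` : the stems of `T'` whose twin link lies in `F`. -/
noncomputable def S1setQ (t : Tree V) (I E F : Finset (Sym2 V)) (c : QT t I) :
    Finset (QT t I) :=
  Finset.univ.filter (fun d => below t I c d ∧
    ∃ a b, qTwinAt t I E a b ∧ s(a, b) ∈ F ∧ qIsLCA t I d.out a b)

/-- `X'` : the original nodes of `T'` lying in `X`. -/
noncomputable def XsetQ (t : Tree V) (I E : Finset (Sym2 V)) (c : QT t I) : Finset (QT t I) :=
  Finset.univ.filter
    (fun d => below t I c d ∧ ¬ qcompoundRep t I d.out ∧ d.out ∈ Xset t E)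

/-- `tickets(T') = |N(T')| + Σ_{x ∈ X'} d_J(x)`. -/
noncomputable def ticketsQ (t : Tree V) (I E F M : Finset (Sym2 V)) (c : QT t I) : ℕ :=
  ((Nlinks t E F M).filter (fun e => ∀ x ∈ e, inT t I c x)).card
    + ∑ d ∈ XsetQ t I E c, deg (Jlinks t E F) d.out

/-- `coupons(T')` : one coupon for each unmatched leaf and each compound node of `T'`,
and `3/2` coupons for each link of `M(T')`. -/
noncomputable def couponsQ (t : Tree V) (I M : Finset (Sym2 V)) (c : QT t I) : ℚ :=
  ((Finset.univ.filter (fun d : QT t I => below t I c d ∧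
      ((qleafRep t I d.out ∧ ¬ matchedRep t I M d.out) ∨ qcompoundRep t I d.out))).card : ℚ)
    + (3 / 2 : ℚ) * ((MlinksQ t I M c).card : ℚ)

/-- `credit(T') = coupons(T') + tickets(T')/2`. -/
noncomputable def creditQ (t : Tree V) (I E F M : Finset (Sym2 V)) (c : QT t I) : ℚ :=
  couponsQ t I M c + (ticketsQ t I E F M c : ℚ) / 2

/-- `T'` is deficient: `credit(T') < |U'| + |M'| + 1`. -/
def DeficientQ (t : Tree V) (I E F M : Finset (Sym2 V)) (c : QT t I) : Prop :=
  creditQ t I E F M c < ((UsetQ t I M c).card : ℚ) + ((MlinksQ t I M c).card : ℚ) + 1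

/-! ### Invariants and greedy steps -/

/-- Credit Invariant: the credit of every subtree of `T/I` is distributed as described:
coupons on unmatched leaves, compound nodes and links of `M`, tickets on links of `N` and
original nodes of `X`. -/
def CreditInvariant (t : Tree V) (E F M I : Finset (Sym2 V)) : Prop :=
  F ⊆ E ∧ M ⊆ E ∧
  ∀ c : QT t I, creditQ t I E F M c = couponsQ t I M c + (ticketsQ t I E F M c : ℚ) / 2

/-- Degree in `T/I` : the number of links of `F` with exactly one end in the class of `x`. -/
noncomputable def qdegQ (t : Tree V) (I F : Finset (Sym2 V)) (x : V) : ℕ :=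
  (F.filter (fun e => (∃ z, z ∈ e ∧ rel t I z x) ∧ ∃ z, z ∈ e ∧ ¬ rel t I z x)).card

/-- Matching Invariant: `M` is a matching on the leaves of `T/I` and `d_F(b) = 1` for
every leaf `b` of `T/I` matched by `M`. -/
def MatchingInvariant (t : Tree V) (F M I : Finset (Sym2 V)) : Prop :=
  IsLeafMatchingQ t I M ∧ ∀ e ∈ M, ∀ b, b ∈ e → qdegQ t I F b = 1

/-- A greedy locking-tree contraction step. -/
def LockStep (t : Tree V) (E M : Finset (Sym2 V)) (I I₂ : Finset (Sym2 V)) : Prop :=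
  ∃ a b b' v u,
    IsLockingTree t E a b b' v ∧
    (∀ e ∈ M, a ∉ e) ∧ (∀ e ∈ M, b ∉ e) ∧ (∀ e ∈ M, b' ∉ e) ∧
    (∀ c c' v', IsLockingTree t E b c c' v' → t.desc v v') ∧
    IsUpLink t E a u ∧ I₂ = I ∪ {s(b, b'), s(a, u)}

/-- A greedy link contraction step: contract a link of `E` joining two `M`-unmatched
leaves of `T/I`. -/
def LinkStep (t : Tree V) (E M : Finset (Sym2 V)) (I I₂ : Finset (Sym2 V)) : Prop :=
  ∃ x y, s(x, y) ∈ E ∧ ¬ rel t I x y ∧ qleafRep t I x ∧ qleafRep t I y ∧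
    ¬ matchedRep t I M x ∧ ¬ matchedRep t I M y ∧ I₂ = insert (s(x, y)) I

/-- Contraction of a semi-closed tree with an exact cover. -/
def SemiStep (t : Tree V) (E M : Finset (Sym2 V)) (I I₂ : Finset (Sym2 V)) : Prop :=
  ∃ (c : QT t I) (I' : Finset (Sym2 V)), I' ⊆ E ∧ SemiClosedQ t I E M c ∧
    IsExactCoverQ t I c I' ∧ I₂ = I ∪ I'

/-- A sequence of greedy locking-tree contractions starting from the empty partial solution. -/
inductive LockPhase {V : Type} [Fintype V] [DecidableEq V]
    (t : Tree V) (E M : Finset (Sym2 V)) : Finset (Sym2 V) → Prop where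
  | base : LockPhase t E M ∅
  | step {I I₂ : Finset (Sym2 V)} :
      LockPhase t E M I → LockStep t E M I I₂ → LockPhase t E M I₂

/-- Partial Solution Invariant: `I` is obtained by first exhausting greedy locking-tree
contractions, and then sequentially applying greedy link contractions or contractions of
semi-closed trees with exact covers. -/
inductive PSI {V : Type} [Fintype V] [DecidableEq V]
    (t : Tree V) (E M : Finset (Sym2 V)) : Finset (Sym2 V) → Prop where
  | start {I : Finset (Sym2 V)} :
      LockPhase t E M I → (∀ I₂, ¬ LockStep t E M I I₂) → PSI t E M I
  | link {I I₂ : Finset (Sym2 V)} : PSI t E M I → LinkStep t E M I I₂ → PSI t E M I₂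
  | semi {I I₂ : Finset (Sym2 V)} : PSI t E M I → SemiStep t E M I I₂ → PSI t E M I₂

/-! ### Dangerous trees -/

/-- The witness structure of a 3-leaf dangerous tree: `a` is the unmatched leaf,
`b, b'` are the matched leaves, `ab' ∈ E`, the contraction of `ab'` does not create a new
leaf, and `T'` is `b`-open. -/
def Witness3 (t : Tree V) (I E M : Finset (Sym2 V)) (c : QT t I) (a b b' : V) : Prop :=
  inT t I c a ∧ inT t I c b ∧ inT t I c b' ∧
  qleafRep t I a ∧ qleafRep t I b ∧ qleafRep t I b' ∧
  ¬ rel t I a b ∧ ¬ rel t I a b' ∧ ¬ rel t I b b' ∧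
  ¬ matchedRep t I M a ∧ matchedRep t I M b ∧ matchedRep t I M b' ∧
  (∃ x y, s(x, y) ∈ E ∧ rel t I x a ∧ rel t I y b' ∧
    ¬ qleafRep t (insert (s(x, y)) I) x) ∧
  (∃ u, qUpNode t I E b u ∧ ¬ inT t I c u)

/-- A 3-leaf dangerous tree. -/
def Dangerous3 (t : Tree V) (I E M : Finset (Sym2 V)) (c : QT t I) : Prop :=
  SemiClosedQ t I E M c ∧ (CsetQ t I c).card = 0 ∧ (MlinksQ t I M c).card = 1 ∧
  (LsetQ t I c).card = 3 ∧ (SsetQ t I E c).card = 0 ∧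
  ∃ a b b', Witness3 t I E M c a b b'

/-- A dangerous tree: a 3-leaf dangerous tree, or a 4-leaf tree with one stem, exactly one
twin of which is matched, such that contracting the twin link yields a 3-leaf dangerous tree. -/
def Dangerous (t : Tree V) (I E M : Finset (Sym2 V)) (c : QT t I) : Prop :=
  Dangerous3 t I E M c ∨
  (SemiClosedQ t I E M c ∧ (CsetQ t I c).card = 0 ∧ (MlinksQ t I M c).card = 1 ∧
    (LsetQ t I c).card = 4 ∧ (SsetQ t I E c).card = 1 ∧
    ∃ a b, qTwinAt t I E a b ∧ inT t I c a ∧ inT t I c b ∧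
      (matchedRep t I M a ↔ ¬ matchedRep t I M b) ∧
      Dangerous3 t (insert (s(a, b)) I) E M (qm t (insert (s(a, b)) I) c.out))

/-! ### The switching construction -/

/-- `W̃` : for every 4-leaf minimally semi-closed (dangerous) tree of `T/I`, its twin link. -/
noncomputable def Wtil (t : Tree V) (I E M : Finset (Sym2 V)) : Finset (Sym2 V) :=
  E.filter (fun e => ∃ (a b : V) (c : QT t I), e = s(a, b) ∧ MinSemiClosedQ t I E M c ∧
    (LsetQ t I c).card = 4 ∧ qTwinAt t I E a b ∧ inT t I c a ∧ inT t I c b)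

/-- The canonical ordering witness of a 3-leaf dangerous tree: if both orderings of the
matched leaves qualify, the up-node of `b` is an ancestor of the up-node of `b'`. -/
def Witness3Canon (t : Tree V) (I E M : Finset (Sym2 V)) (c : QT t I) (a b b' : V) : Prop :=
  Witness3 t I E M c a b b' ∧
  (Witness3 t I E M c a b' b →
    ∃ u u', qUpNode t I E b u ∧ qUpNode t I E b' u' ∧ qdescRep t I u u')

/-- `M̃` is obtained from `M` by switching, in each (3-leaf dangerous) tree `D̃` of `T̃`
corresponding to a minimally semi-closed tree of `T/I`, the matching link `bb'` to `ab'`. -/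
def SwitchedMatching (t : Tree V) (I E M Mt : Finset (Sym2 V)) : Prop :=
  ∀ e : Sym2 V, e ∈ Mt ↔
    ((e ∈ M ∧ ∀ c : QT t I, MinSemiClosedQ t I E M c →
        ∀ x, x ∈ e → ¬ inT t (I ∪ Wtil t I E M) (qm t (I ∪ Wtil t I E M) c.out) x) ∨
     (∃ (c : QT t I) (a b b' x y : V), MinSemiClosedQ t I E M c ∧
        Witness3Canon t (I ∪ Wtil t I E M) E M (qm t (I ∪ Wtil t I E M) c.out) a b b' ∧
        e = s(x, y) ∧ e ∈ E ∧ rel t (I ∪ Wtil t I E M) x a ∧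
        rel t (I ∪ Wtil t I E M) y b' ∧
        ¬ qleafRep t (insert e (I ∪ Wtil t I E M)) x))

/-! ### Infrastructure for the proof -/
set_option linter.unusedSectionVars false

namespace Tree

variable {V : Type} (t : Tree V)

theorem desc_refl (v : V) : t.desc v v := ⟨0, rfl⟩

theorem desc_trans {w u v : V} (h1 : t.desc w u) (h2 : t.desc u v) : t.desc w v := by
  obtain ⟨n, hn⟩ := h1; obtain ⟨m, hm⟩ := h2
  exact ⟨n + m, by rw [Function.iterate_add_apply, hm, hn]⟩

theorem parent_iterate_root (n : ℕ) : t.parent^[n] t.root = t.root := by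
  induction n with
  | zero => rfl
  | succ n ih => rw [Function.iterate_succ_apply', ih, t.parent_root]

theorem desc_root (v : V) : t.desc t.root v := t.reach v

theorem eq_root_of_desc_root {w : V} (h : t.desc w t.root) : w = t.root := by
  obtain ⟨n, hn⟩ := h
  rw [t.parent_iterate_root] at hn; exact hn.symm

theorem eq_root_of_parent_eq {a : V} (h : t.parent a = a) : a = t.root := by
  obtain ⟨n, hn⟩ := t.reach a
  have key : ∀ m, t.parent^[m] a = a := by
    intro m
    induction m with
    | zero => rfl
    | succ m ih => rw [Function.iterate_succ_apply, h, ih]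
  rw [key n] at hn; exact hn

theorem depth_spec (v : V) : t.parent^[t.depth v] v = t.root :=
  @Nat.find_spec (fun n => t.parent^[n] v = t.root) (Classical.decPred _) (t.reach v)

theorem depth_le {v : V} {n : ℕ} (h : t.parent^[n] v = t.root) : t.depth v ≤ n :=
  @Nat.find_min' (fun n => t.parent^[n] v = t.root) (Classical.decPred _) (t.reach v) n h

theorem depth_root : t.depth t.root = 0 := Nat.le_zero.mp (t.depth_le rfl)

theorem iterate_stable {v : V} {n : ℕ} (h : t.depth v ≤ n) : t.parent^[n] v = t.root := by
  have : n = (n - t.depth v) + t.depth v := (Nat.sub_add_cancel h).symm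
  rw [this, Function.iterate_add_apply, t.depth_spec, t.parent_iterate_root]

theorem depth_le_of_desc {w v : V} (h : t.desc w v) : t.depth w ≤ t.depth v := by
  obtain ⟨n, hn⟩ := h
  rcases le_or_gt n (t.depth v) with hle | hlt
  · have : t.parent^[t.depth v - n] w = t.root := by
      rw [← hn, ← Function.iterate_add_apply, Nat.sub_add_cancel hle]
      exact t.depth_spec v
    exact le_trans (t.depth_le this) (Nat.sub_le _ _)
  · have : w = t.root := by rw [← hn, t.iterate_stable hlt.le]
    rw [this, t.depth_root]; exact Nat.zero_le _

theorem eq_of_desc_of_depth_le {s w : V} (h : t.desc s w) (hd : t.depth w ≤ t.depth s) :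
    w = s := by
  obtain ⟨n, hn⟩ := h
  rcases le_or_gt n (t.depth w) with hle | hlt
  · have h1 : t.parent^[t.depth w - n] s = t.root := by
      rw [← hn, ← Function.iterate_add_apply, Nat.sub_add_cancel hle]
      exact t.depth_spec w
    have h2 : t.depth s ≤ t.depth w - n := t.depth_le h1
    have hn0 : n = 0 := by omega
    rw [hn0] at hn; simpa using hn
  · have hs : s = t.root := by rw [← hn, t.iterate_stable hlt.le]
    have h0 : t.depth w = 0 := by rw [hs, t.depth_root] at hd; omega
    have hw : w = t.root := by
      have hspec := t.depth_spec w; rw [h0] at hspec; simpa using hspec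
    rw [hw, hs]

theorem desc_antisymm {w v : V} (h1 : t.desc w v) (h2 : t.desc v w) : w = v :=
  t.eq_of_desc_of_depth_le h2 (t.depth_le_of_desc h1)

theorem desc_total_of_desc {w u v : V} (h1 : t.desc w v) (h2 : t.desc u v) :
    t.desc w u ∨ t.desc u w := by
  obtain ⟨n, hn⟩ := h1; obtain ⟨m, hm⟩ := h2
  rcases le_total n m with h | h
  · right
    exact ⟨m - n, by rw [← hn, ← Function.iterate_add_apply, Nat.sub_add_cancel h, hm]⟩
  · left
    exact ⟨n - m, by rw [← hm, ← Function.iterate_add_apply, Nat.sub_add_cancel h, hn]⟩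

theorem desc_of_desc_of_depth_le {w u a : V} (h1 : t.desc w a) (h2 : t.desc u a)
    (hd : t.depth w ≤ t.depth u) : t.desc w u := by
  rcases t.desc_total_of_desc h1 h2 with h | h
  · exact h
  · have := t.eq_of_desc_of_depth_le h (le_antisymm (t.depth_le_of_desc h) hd ▸ le_refl _)
    rw [← this]; exact t.desc_refl _

theorem IsLeaf.ne_root {a : V} {t : Tree V} (h : t.IsLeaf a) : a ≠ t.root := h.1

theorem eq_of_leaf_desc {a y : V} (hl : t.IsLeaf a) (hd : t.desc a y) : y = a := by
  obtain ⟨n, hn⟩ := hd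
  cases n with
  | zero => simpa using hn
  | succ n =>
    exfalso
    rw [Function.iterate_succ_apply'] at hn
    set u := t.parent^[n] y with hu
    by_cases hua : u = a
    · rw [hua] at hn; exact hl.1 (t.eq_root_of_parent_eq hn)
    · exact hl.2 u hua hn

theorem exists_leaf_desc [Fintype V] {w : V} (hw : w ≠ t.root) :
    ∃ l, t.IsLeaf l ∧ t.desc w l := by
  classical
  have hne : (Finset.univ.filter (fun y => t.desc w y)).Nonempty :=
    ⟨w, by simp [t.desc_refl]⟩
  obtain ⟨l, hl, hmax⟩ := Finset.exists_max_image _ t.depth hne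
  simp only [Finset.mem_filter, Finset.mem_univ, true_and] at hl hmax
  refine ⟨l, ⟨?_, ?_⟩, hl⟩
  · intro hroot
    rw [hroot] at hl
    exact hw (t.eq_root_of_desc_root hl)
  · intro u hu hpu
    have hlu : t.desc l u := ⟨1, by simpa using hpu⟩
    have hwu : t.desc w u := t.desc_trans hl hlu
    have h1 : t.depth u ≤ t.depth l := hmax u hwu
    have hune : u ≠ t.root := by
      intro h; rw [h] at hpu
      rw [t.parent_root] at hpu
      exact hu (by rw [h, ← hpu])
    have hd0 : t.depth u ≠ 0 := by
      intro h0
      have := t.depth_spec u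
      rw [h0] at this
      exact hune this
    have hdu : 1 ≤ t.depth u := Nat.one_le_iff_ne_zero.mpr hd0
    have h2 : t.parent^[t.depth u - 1] l = t.root := by
      have hspec := t.depth_spec u
      rw [← Nat.sub_add_cancel hdu, Function.iterate_add_apply] at hspec
      simpa [hpu] using hspec
    have := t.depth_le h2
    omega

theorem exists_lca [Fintype V] (a b : V) : ∃ s, t.IsLCA s a b := by
  classical
  have hne : (Finset.univ.filter (fun w => t.desc w a ∧ t.desc w b)).Nonempty :=
    ⟨t.root, by simp [t.desc_root]⟩
  obtain ⟨s, hs, hmax⟩ := Finset.exists_max_image _ t.depth hne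
  simp only [Finset.mem_filter, Finset.mem_univ, true_and] at hs hmax
  refine ⟨s, hs.1, hs.2, ?_⟩
  intro w hwa hwb
  rcases t.desc_total_of_desc hwa hs.1 with h | h
  · exact h
  · have : w = s := t.eq_of_desc_of_depth_le h (hmax w ⟨hwa, hwb⟩)
    rw [this]; exact t.desc_refl _

theorem onPath_symm {w u v : V} (h : t.onPath w u v) : t.onPath w v u := by
  rcases h with ⟨h1, h2⟩ | ⟨h1, h2⟩
  · exact Or.inr ⟨h1, h2⟩
  · exact Or.inl ⟨h1, h2⟩

theorem IsLCA.desc_of_common {s a b w : V} {t : Tree V} (h : t.IsLCA s a b)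
    (hwa : t.desc w a) (hwb : t.desc w b) : t.desc w s := h.2.2 w hwa hwb

end Tree

variable {V : Type} [Fintype V] [DecidableEq V]

theorem covers_mk {t : Tree V} {u v w : V} : covers t s(u, v) w ↔ t.onPath w u v := by
  constructor
  · rintro ⟨p, q, heq, hp⟩
    rcases Sym2.eq_iff.mp heq with ⟨rfl, rfl⟩ | ⟨rfl, rfl⟩
    · exact hp
    · exact t.onPath_symm hp
  · intro h; exact ⟨u, v, rfl, h⟩

theorem not_covers_diag {t : Tree V} {u w : V} : ¬ covers t s(u, u) w := by
  rw [covers_mk]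
  rintro (⟨h1, h2⟩ | ⟨h1, h2⟩) <;> exact h2 h1

theorem leaf_mem_of_covers {t : Tree V} {e : Sym2 V} {w : V} (hl : t.IsLeaf w)
    (h : covers t e w) : w ∈ e := by
  obtain ⟨p, q, rfl, hp⟩ := h
  rw [Sym2.mem_iff]
  rcases hp with ⟨h1, _⟩ | ⟨h1, _⟩
  · exact Or.inl (t.eq_of_leaf_desc hl h1).symm
  · exact Or.inr (t.eq_of_leaf_desc hl h1).symm

theorem covers_of_mem_leaf {t : Tree V} {e : Sym2 V} {w : V} (hl : t.IsLeaf w)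
    (hmem : w ∈ e) (hnd : ¬ e.IsDiag) : covers t e w := by
  induction e with
  | _ p q =>
    rw [Sym2.mem_iff] at hmem
    rw [Sym2.mk_isDiag_iff] at hnd
    rcases hmem with rfl | rfl
    · exact covers_mk.mpr (Or.inl ⟨t.desc_refl _, fun hd => hnd (t.eq_of_leaf_desc hl hd).symm⟩)
    · exact covers_mk.mpr (Or.inr ⟨t.desc_refl _, fun hd => hnd (t.eq_of_leaf_desc hl hd)⟩)

theorem rel_refl' {t : Tree V} {I : Finset (Sym2 V)} (u : V) : rel t I u u := by
  intro w _ hp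
  rcases hp with ⟨h1, h2⟩ | ⟨h1, h2⟩ <;> exact absurd h1 h2

theorem rel_symm' {t : Tree V} {I : Finset (Sym2 V)} {u v : V} (h : rel t I u v) :
    rel t I v u := fun w hw hp => h w hw (t.onPath_symm hp)


/-- Core exchange for two links at a leaf in a shadows-minimal cover. -/
theorem two_links_aux {t : Tree V} {F : Finset (Sym2 V)} (hsm : ShadowsMinimal t F)
    {c u u' : V} (hl : t.IsLeaf c) (hf : s(c, u) ∈ F) (hg : s(c, u') ∈ F)
    (hne : s(c, u) ≠ s(c, u')) (hu' : u' ≠ c)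
    {l l' : V} (hL : t.IsLCA l c u) (hL' : t.IsLCA l' c u') (hcmp : t.desc l l') :
    False := by
  by_cases hdeg : l' = u'
  · -- u' is an ancestor of c ; erasing s(c,u') keeps a cover
    subst hdeg
    refine hsm.2.1 (s(c, l')) hg ?_
    intro w hw
    obtain ⟨e, he, hcov⟩ := hsm.1 w hw
    by_cases heg : e = s(c, l')
    · refine ⟨s(c, u), Finset.mem_erase.mpr ⟨hne, hf⟩, covers_mk.mpr ?_⟩
      rw [heg, covers_mk] at hcov
      rcases hcov with ⟨h1, h2⟩ | ⟨h1, h2⟩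
      · exact Or.inl ⟨h1, fun hdu => h2 (t.desc_trans (hL.2.2 w h1 hdu) hcmp)⟩
      · exact absurd (t.desc_trans h1 hL'.1) h2
    · exact ⟨e, Finset.mem_erase.mpr ⟨heg, he⟩, hcov⟩
  · -- replace s(c,u') by its proper shadow s(l',u')
    have hshadow : Shadow t (s(l', u')) (s(c, u')) := by
      intro w hcov
      rw [covers_mk] at hcov; rw [covers_mk]
      rcases hcov with ⟨h1, h2⟩ | ⟨h1, h2⟩
      · exact Or.inl ⟨t.desc_trans h1 hL'.1, h2⟩
      · exact Or.inr ⟨h1, fun hwc => h2 (hL'.2.2 w hwc h1)⟩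
    have hps : ProperShadow t (s(l', u')) (s(c, u')) := by
      refine ⟨hshadow, c, ?_, ?_⟩
      · exact covers_mk.mpr (Or.inl ⟨t.desc_refl _, fun hd => hu' (t.eq_of_leaf_desc hl hd)⟩)
      · intro hcov
        rw [covers_mk] at hcov
        rcases hcov with ⟨h1, _⟩ | ⟨h1, _⟩
        · have hlc : l' = c := t.eq_of_leaf_desc hl h1
          rw [hlc] at hL'
          exact hu' (t.eq_of_leaf_desc hl hL'.2.1)
        · exact hu' (t.eq_of_leaf_desc hl h1)
    refine hsm.2.2 (s(c, u')) hg (s(l', u')) hps ?_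
    intro w hw
    obtain ⟨e, he, hcov⟩ := hsm.1 w hw
    by_cases heg : e = s(c, u')
    · rw [heg, covers_mk] at hcov
      rcases hcov with ⟨h1, h2⟩ | ⟨h1, h2⟩
      · by_cases hwl : t.desc w l'
        · exact ⟨s(l', u'), Finset.mem_insert_self _ _, covers_mk.mpr (Or.inl ⟨hwl, h2⟩)⟩
        · refine ⟨s(c, u), Finset.mem_insert.mpr (Or.inr (Finset.mem_erase.mpr ⟨hne, hf⟩)),
            covers_mk.mpr (Or.inl ⟨h1, fun hdu => hwl (t.desc_trans (hL.2.2 w h1 hdu) hcmp)⟩)⟩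
      · exact ⟨s(l', u'), Finset.mem_insert_self _ _,
          covers_mk.mpr (Or.inr ⟨h1, fun hwl => h2 (t.desc_trans hwl hL'.1)⟩)⟩
    · exact ⟨e, Finset.mem_insert.mpr (Or.inr (Finset.mem_erase.mpr ⟨heg, he⟩)), hcov⟩

/-- In a shadows-minimal cover, every leaf is incident to exactly one link. -/
theorem leaf_unique_link {t : Tree V} {E F : Finset (Sym2 V)}
    (hnd : ∀ e ∈ E, ¬ e.IsDiag) (hFE : F ⊆ E) (hsm : ShadowsMinimal t F)
    {c : V} (hl : t.IsLeaf c) :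
    ∃ f ∈ F, c ∈ f ∧ ∀ g ∈ F, c ∈ g → g = f := by
  obtain ⟨f, hf, hcov⟩ := hsm.1 c hl.1
  have hcf : c ∈ f := leaf_mem_of_covers hl hcov
  refine ⟨f, hf, hcf, ?_⟩
  intro g hg hcg
  by_contra hne
  obtain ⟨u, rfl⟩ := Sym2.mem_iff_exists.mp hcf
  obtain ⟨u', rfl⟩ := Sym2.mem_iff_exists.mp hcg
  have hu : u ≠ c := by
    intro h; rw [h] at hf
    exact hnd _ (hFE hf) (Sym2.mk_isDiag_iff.mpr rfl)
  have hu' : u' ≠ c := by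
    intro h; rw [h] at hg
    exact hnd _ (hFE hg) (Sym2.mk_isDiag_iff.mpr rfl)
  obtain ⟨l, hL⟩ := t.exists_lca c u
  obtain ⟨l', hL'⟩ := t.exists_lca c u'
  rcases t.desc_total_of_desc hL.1 hL'.1 with hcmp | hcmp
  · exact two_links_aux hsm hl hf hg (fun h => hne h.symm) hu' hL hL' hcmp
  · exact two_links_aux hsm hl hg hf hne hu hL' hL hcmp


theorem not_covers_of_diag {t : Tree V} {e : Sym2 V} (h : e.IsDiag) (w : V) :
    ¬ covers t e w := by
  induction e with
  | _ p q =>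
    rw [Sym2.mk_isDiag_iff] at h
    subst h
    exact not_covers_diag

/-- The number of tree edges covered by a link. -/
noncomputable def cnum (t : Tree V) (e : Sym2 V) : ℕ :=
  (Finset.univ.filter (fun w => covers t e w)).card

theorem cnum_lt_of_proper {t : Tree V} {e' e : Sym2 V} (h : ProperShadow t e' e) :
    cnum t e' < cnum t e := by
  apply Finset.card_lt_card
  constructor
  · intro w hw
    simp only [Finset.mem_filter, Finset.mem_univ, true_and] at hw ⊢
    exact h.1 w hw
  · intro hsub
    obtain ⟨w, hc, hn⟩ := h.2
    have := hsub (by simp only [Finset.mem_filter, Finset.mem_univ, true_and]; exact hc)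
    simp only [Finset.mem_filter, Finset.mem_univ, true_and] at this
    exact hn this

/-- The key exchange lemma: given a good cover `F`, a twin link `ab ∉ F`, and an exchanged
cover `F2` containing `ab` (with `ab` the unique link of `F2` at `a` and `b`, and all twin
links of `F` preserved with unique incidences), we get a contradiction with the maximality
of the number of twin links of `F`. -/
theorem exchange_lemma {t : Tree V} {E F : Finset (Sym2 V)}
    (hnd : ∀ e ∈ E, ¬ e.IsDiag) (hsh : ShadowClosed t E) (hF : IsGoodCover t E F)
    {a b : V} (hab : TwinPair t a b) (habE : s(a, b) ∈ E) (habF : s(a, b) ∉ F)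
    {F2 : Finset (Sym2 V)} (hF2E : F2 ⊆ E) (hcov2 : IsCover t F2)
    (hcard2 : F2.card ≤ F.card) (habF2 : s(a, b) ∈ F2)
    (huniq : ∀ f ∈ F2, ∀ c, c ∈ s(a, b) → c ∈ f → f = s(a, b))
    (hpres : ∀ e ∈ F, IsTwinLinkE t e → e ∈ F2 ∧ ∀ f ∈ F2, ∀ c, c ∈ e → c ∈ f → f = e) :
    False := by
  classical
  set P : Finset (Sym2 V) := insert (s(a, b)) (F.filter (fun e => IsTwinLinkE t e)) with hP
  have htwinP : ∀ p ∈ P, IsTwinLinkE t p := by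
    intro p hp
    rcases Finset.mem_insert.mp hp with rfl | hp
    · exact ⟨a, b, rfl, hab⟩
    · exact (Finset.mem_filter.mp hp).2
  have hleafP : ∀ p ∈ P, ∀ c ∈ p, t.IsLeaf c := by
    intro p hp c hc
    obtain ⟨a', b', rfl, htw⟩ := htwinP p hp
    rcases Sym2.mem_iff.mp hc with rfl | rfl
    · exact htw.1
    · exact htw.2.1
  have small : ∀ (H : Finset (Sym2 V)), H ⊆ E → IsCover t H → H.card < F.card → False :=
    fun H hHE hHcov hlt => absurd (hF.2.2.1 H hHE hHcov) (by omega)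
  have hopt : F2.card = F.card := le_antisymm hcard2 (hF.2.2.1 F2 hF2E hcov2)
  -- the invariant-preserving minimalization
  have main : ∀ n, ∀ G : Finset (Sym2 V), (∑ e ∈ G, cnum t e) = n →
      G ⊆ E → IsCover t G → G.card = F.card →
      (∀ p ∈ P, p ∈ G ∧ ∀ f ∈ G, ∀ c, c ∈ p → c ∈ f → f = p) → False := by
    intro n
    induction n using Nat.strong_induction_on with
    | _ n IH =>
      intro G hμ hGE hGcov hGcard hProt
      by_cases hB : ∃ e ∈ G, IsCover t (G.erase e)
      · obtain ⟨e, he, hc⟩ := hB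
        refine small (G.erase e) (fun f hf => hGE (Finset.mem_of_mem_erase hf)) hc ?_
        have h1 := Finset.card_erase_of_mem he
        have h2 : 0 < G.card := Finset.card_pos.mpr ⟨e, he⟩
        omega
      · by_cases hC : ∃ e ∈ G, ∃ e', ProperShadow t e' e ∧ IsCover t (insert e' (G.erase e))
        · obtain ⟨e, he, e', hps, hc⟩ := hC
          by_cases hdiag : e'.IsDiag
          · refine hB ⟨e, he, ?_⟩
            intro w hw
            obtain ⟨f, hf, hfc⟩ := hc w hw
            rcases Finset.mem_insert.mp hf with rfl | hf
            · exact absurd hfc (not_covers_of_diag hdiag w)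
            · exact ⟨f, hf, hfc⟩
          · by_cases hdup : e' ∈ G.erase e
            · rw [Finset.insert_eq_self.mpr hdup] at hc
              exact hB ⟨e, he, hc⟩
            · -- genuine replacement step
              have he'E : e' ∈ E := hsh e (hGE he) e' hdiag hps.1
              have hpe' : e' ≠ e := by
                intro h
                obtain ⟨w, hcw, hnw⟩ := hps.2
                rw [h] at hnw; exact hnw hcw
              -- protected links are untouched
              have hpne : ∀ p ∈ P, p ≠ e := by
                intro p hp heq
                obtain ⟨c, d, hpcd, htw⟩ := htwinP p hp
                have hcd : c ≠ d := htw.2.2.1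
                have hcp : c ∈ p := by rw [hpcd]; simp
                have hdp : d ∈ p := by rw [hpcd]; simp
                -- edge at c must be covered in the new cover
                obtain ⟨f, hf, hfc⟩ := hc c htw.1.1
                have hcf : c ∈ f := leaf_mem_of_covers htw.1 hfc
                have hfe' : f = e' := by
                  rcases Finset.mem_insert.mp hf with rfl | hf
                  · rfl
                  · exact absurd ((hProt _ hp).2 f (Finset.mem_of_mem_erase hf) c hcp hcf)
                      (heq ▸ Finset.ne_of_mem_erase hf)
                -- likewise for d
                obtain ⟨g, hg, hgc⟩ := hc d htw.2.1.1
                have hdg : d ∈ g := leaf_mem_of_covers htw.2.1 hgc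
                have hge' : g = e' := by
                  rcases Finset.mem_insert.mp hg with rfl | hg
                  · rfl
                  · exact absurd ((hProt _ hp).2 g (Finset.mem_of_mem_erase hg) d hdp hdg)
                      (heq ▸ Finset.ne_of_mem_erase hg)
                have hce' : c ∈ e' := hfe' ▸ hcf
                have hde' : d ∈ e' := hge' ▸ hdg
                obtain ⟨y, hy⟩ := Sym2.mem_iff_exists.mp hce'
                have hdy : d = y := by
                  rw [hy, Sym2.mem_iff] at hde'
                  rcases hde' with h | h
                  · exact absurd h.symm hcd
                  · exact h
                apply hpe'
                rw [hy, ← hdy, ← hpcd]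
                exact heq
              -- set up the new state
              have hGE' : insert e' (G.erase e) ⊆ E := by
                intro f hf
                rcases Finset.mem_insert.mp hf with rfl | hf
                · exact he'E
                · exact hGE (Finset.mem_of_mem_erase hf)
              have hcard' : (insert e' (G.erase e)).card = F.card := by
                rw [Finset.card_insert_of_notMem hdup, Finset.card_erase_of_mem he]
                have : 0 < G.card := Finset.card_pos.mpr ⟨e, he⟩
                omega
              have hProt' : ∀ p ∈ P, p ∈ insert e' (G.erase e) ∧
                  ∀ f ∈ insert e' (G.erase e), ∀ c, c ∈ p → c ∈ f → f = p := by
                intro p hp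
                constructor
                · exact Finset.mem_insert.mpr (Or.inr (Finset.mem_erase.mpr
                    ⟨hpne p hp, (hProt p hp).1⟩))
                · intro f hf c hcp hcf
                  rcases Finset.mem_insert.mp hf with rfl | hf
                  · exfalso
                    have hlc : t.IsLeaf c := hleafP p hp c hcp
                    have hcovc : covers t f c := covers_of_mem_leaf hlc hcf hdiag
                    have hcove : covers t e c := hps.1 c hcovc
                    have hce : c ∈ e := leaf_mem_of_covers hlc hcove
                    exact hpne p hp ((hProt p hp).2 e he c hcp hce).symm
                  · exact (hProt p hp).2 f (Finset.mem_of_mem_erase hf) c hcp hcf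
              -- measure decreases
              have hμ' : (∑ f ∈ insert e' (G.erase e), cnum t f) < n := by
                rw [Finset.sum_insert hdup]
                have h1 : (∑ f ∈ G.erase e, cnum t f) + cnum t e = ∑ f ∈ G, cnum t f :=
                  Finset.sum_erase_add G _ he
                have h2 : cnum t e' < cnum t e := cnum_lt_of_proper hps
                omega
              exact IH _ hμ' _ rfl hGE' (hc) hcard' hProt'
        · -- G is shadows-minimal : twin-count contradiction
          have hsm : ShadowsMinimal t G :=
            ⟨hGcov, fun e he hcov => hB ⟨e, he, hcov⟩,
             fun e he e' hps hcov => hC ⟨e, he, e', hps, hcov⟩⟩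
          have hle := hF.2.2.2 G hGE hsm hGcard
          have hsub : P ⊆ G.filter (fun e => IsTwinLinkE t e) := by
            intro p hp
            exact Finset.mem_filter.mpr ⟨(hProt p hp).1, htwinP p hp⟩
          have hPcard : P.card = twinCount t F + 1 := by
            rw [hP, Finset.card_insert_of_notMem (fun h => habF (Finset.mem_filter.mp h).1)]
            rfl
          have hcards := Finset.card_le_card hsub
          rw [hPcard] at hcards
          have hfin : twinCount t F + 1 ≤ twinCount t G := hcards
          omega
  -- initialize
  refine main _ F2 rfl hF2E hcov2 hopt ?_
  intro p hp
  rcases Finset.mem_insert.mp hp with rfl | hpmem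
  · exact ⟨habF2, fun f hf c hcp hcf => huniq f hf c hcp hcf⟩
  · exact hpres p (Finset.mem_filter.mp hpmem).1 (Finset.mem_filter.mp hpmem).2


/-- Splitting a path at a node `s'` below `α` that dominates all common ancestors. -/
theorem onPath_split {t : Tree V} {s' α β x w : V} (hsα : t.desc s' α)
    (hcomm : ∀ w', t.desc w' α → t.desc w' β → t.desc w' s') (h : t.onPath w α x) :
    t.onPath w α β ∨ t.onPath w s' x := by
  rcases h with ⟨h1, h2⟩ | ⟨h1, h2⟩
  · by_cases hws : t.desc w s'
    · exact Or.inr (Or.inl ⟨hws, h2⟩)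
    · exact Or.inl (Or.inl ⟨h1, fun hb => hws (hcomm w h1 hb)⟩)
  · refine Or.inr (Or.inr ⟨h1, fun hws => h2 (t.desc_trans hws hsα)⟩)

/-- A path from `s'` into the subtree of `s'` is inside the `α β`-path. -/
theorem onPath_into {t : Tree V} {s' α β x w : V} (hsx : t.desc s' x) (hxα : t.desc x α)
    (hcomm : ∀ w', t.desc w' α → t.desc w' β → t.desc w' s') (h : t.onPath w s' x) :
    t.onPath w α β := by
  rcases h with ⟨h1, h2⟩ | ⟨h1, h2⟩
  · exact absurd (t.desc_trans h1 hsx) h2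
  · exact Or.inl ⟨t.desc_trans h1 hxα, fun hb => h2 (hcomm w (t.desc_trans h1 hxα) hb)⟩

/-- Generic shadow: `s(s',x)` is a shadow of `s(α,x)`. -/
theorem shadow_gen {t : Tree V} {s' α x : V} (hsα : t.desc s' α)
    (hno : ∀ w, t.desc w x → t.desc w α → t.desc w s') :
    Shadow t (s(s', x)) (s(α, x)) := by
  intro w hc
  rw [covers_mk] at hc; rw [covers_mk]
  rcases hc with ⟨h1, h2⟩ | ⟨h1, h2⟩
  · exact Or.inl ⟨t.desc_trans h1 hsα, h2⟩
  · exact Or.inr ⟨h1, fun hwa => h2 (hno w h1 hwa)⟩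

/-- Both endpoints of a twin link are leaves. -/
theorem twin_ends {t : Tree V} {e : Sym2 V} (h : IsTwinLinkE t e) :
    ∀ c ∈ e, t.IsLeaf c := by
  obtain ⟨p, q, rfl, htw⟩ := h
  intro c hc
  rcases Sym2.mem_iff.mp hc with rfl | rfl
  · exact htw.1
  · exact htw.2.1

/-- The subtree rooted at the least common ancestor of a twin pair is the path
between the twins. -/
theorem twin_path {t : Tree V} {c d : V} (htw : TwinPair t c d) {s3 : V}
    (hS3 : t.IsLCA s3 c d) : ∀ y, t.desc s3 y → t.desc y c ∨ t.desc y d := by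
  obtain ⟨hlc, hld, hcd, hnr, hcl⟩ := htw
  have hrels : rel t {s(c, d)} s3 c := by
    intro w hw hp
    rcases hp with ⟨h1, h2⟩ | ⟨h1, h2⟩
    · exact absurd (t.desc_trans h1 hS3.1) h2
    · exact ⟨s(c, d), Finset.mem_singleton_self _,
        covers_mk.mpr (Or.inl ⟨h1, fun hdb => h2 (hS3.2.2 w h1 hdb)⟩)⟩
  have hdown : ∀ n, ∀ y, t.parent^[n] y = s3 → rel t {s(c, d)} y c := by
    intro n
    induction n with
    | zero => intro y hy; rw [show y = s3 from hy]; exact hrels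
    | succ n ih =>
      intro y hy
      have hstep : t.parent^[n] (t.parent y) = s3 := by
        rw [← Function.iterate_succ_apply]; exact hy
      exact hcl y (ih _ hstep)
  intro y hy
  obtain ⟨n, hn⟩ := hy
  have hrel := hdown n y hn
  by_cases hyc : t.desc y c
  · exact Or.inl hyc
  by_cases hyr : y = t.root
  · exact Or.inl (hyr ▸ t.desc_root c)
  obtain ⟨e, hmem, hcov⟩ := hrel y hyr (Or.inl ⟨t.desc_refl y, hyc⟩)
  rw [Finset.mem_singleton] at hmem
  subst hmem
  rcases covers_mk.mp hcov with ⟨h1, _⟩ | ⟨h1, _⟩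
  · exact absurd h1 hyc
  · exact Or.inr h1


section ExchangeSteps

variable {t : Tree V} {E F : Finset (Sym2 V)}

/-- Exchange removing `ax, bz` and adding only `ab`: contradicts optimality. -/
theorem exchange21 (hF : IsGoodCover t E F)
    {a b x z : V} (habE : s(a, b) ∈ E)
    (haxF : s(a, x) ∈ F) (hbzF : s(b, z) ∈ F) (hne : s(a, x) ≠ s(b, z))
    (hrepl : ∀ w, covers t (s(a, x)) w ∨ covers t (s(b, z)) w → covers t (s(a, b)) w) :
    False := by
  classical
  set R : Finset (Sym2 V) := (F.erase (s(a, x))).erase (s(b, z)) with hR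
  set F2 : Finset (Sym2 V) := insert (s(a, b)) R with hF2
  have hRF : R ⊆ F := fun f hf => Finset.mem_of_mem_erase (Finset.mem_of_mem_erase hf)
  have hF2E : F2 ⊆ E := by
    intro f hf
    rcases Finset.mem_insert.mp hf with rfl | hf
    · exact habE
    · exact hF.1 (hRF hf)
  have hcov : IsCover t F2 := by
    intro w hw
    obtain ⟨g, hg, hgc⟩ := hF.2.1.1 w hw
    by_cases hg1 : g = s(a, x)
    · exact ⟨s(a, b), Finset.mem_insert_self _ _, hrepl w (Or.inl (hg1 ▸ hgc))⟩
    by_cases hg2 : g = s(b, z)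
    · exact ⟨s(a, b), Finset.mem_insert_self _ _, hrepl w (Or.inr (hg2 ▸ hgc))⟩
    · exact ⟨g, Finset.mem_insert.mpr (Or.inr (Finset.mem_erase.mpr
        ⟨hg2, Finset.mem_erase.mpr ⟨hg1, hg⟩⟩)), hgc⟩
  have hbzR : s(b, z) ∈ F.erase (s(a, x)) := Finset.mem_erase.mpr ⟨fun h => hne h.symm, hbzF⟩
  have hcard : F2.card < F.card := by
    have h1 : R.card = F.card - 2 := by
      rw [hR, Finset.card_erase_of_mem hbzR, Finset.card_erase_of_mem haxF]
      omega
    have h2 : 2 ≤ F.card := by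
      have : ({s(a, x), s(b, z)} : Finset (Sym2 V)) ⊆ F := by
        intro f hf
        rcases Finset.mem_insert.mp hf with rfl | hf
        · exact haxF
        · rw [Finset.mem_singleton] at hf; exact hf ▸ hbzF
      have := Finset.card_le_card this
      rwa [Finset.card_insert_of_notMem (by simpa using hne), Finset.card_singleton] at this
    have h3 : F2.card ≤ R.card + 1 := Finset.card_insert_le _ _
    omega
  exact absurd (hF.2.2.1 F2 hF2E hcov) (by omega)

/-- Exchange removing `ax, bz` and adding `ab, e2`: contradicts twin-maximality. -/
theorem exchange22 (hnd : ∀ e ∈ E, ¬ e.IsDiag) (hsh : ShadowClosed t E)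
    (hF : IsGoodCover t E F)
    {a b x z : V} (htw : TwinPair t a b) (habE : s(a, b) ∈ E)
    (haxF : s(a, x) ∈ F) (hbzF : s(b, z) ∈ F)
    (hxnl : ¬ t.IsLeaf x) (hza : z ≠ a)
    (hauniq : ∀ g ∈ F, a ∈ g → g = s(a, x))
    (hbuniq : ∀ g ∈ F, b ∈ g → g = s(b, z))
    (hbznt : ¬ IsTwinLinkE t (s(b, z)))
    {e2 : Sym2 V} (he2E : e2 ∈ E)
    (he2ends : ∀ c, c ∈ e2 → t.IsLeaf c → c = z)
    (hrepl : ∀ w, covers t (s(a, x)) w ∨ covers t (s(b, z)) w →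
      covers t (s(a, b)) w ∨ covers t e2 w ∨
        ∃ g ∈ F, g ≠ s(a, x) ∧ g ≠ s(b, z) ∧ covers t g w) :
    False := by
  classical
  have hla : t.IsLeaf a := htw.1
  have hlb : t.IsLeaf b := htw.2.1
  have hanb : a ≠ b := htw.2.2.1
  have hxa : x ≠ a := fun h => hxnl (h ▸ hla)
  have hxb : x ≠ b := fun h => hxnl (h ▸ hlb)
  have hzb : z ≠ b := by
    intro h
    exact hnd _ (hF.1 hbzF) (by rw [h]; exact Sym2.mk_isDiag_iff.mpr rfl)
  have haxbz : s(a, x) ≠ s(b, z) := by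
    intro h
    rcases Sym2.eq_iff.mp h with ⟨h1, _⟩ | ⟨h1, h2⟩
    · exact hanb h1
    · exact hxb h2
  have habF : s(a, b) ∉ F := by
    intro h
    have := hauniq _ h (by simp)
    rcases Sym2.eq_iff.mp this with ⟨_, h2⟩ | ⟨h1, _⟩
    · exact hxb h2.symm
    · exact hxa (by rw [← h1])
  set R : Finset (Sym2 V) := (F.erase (s(a, x))).erase (s(b, z)) with hR
  set F2 : Finset (Sym2 V) := insert (s(a, b)) (insert e2 R) with hF2
  have hRF : R ⊆ F := fun f hf => Finset.mem_of_mem_erase (Finset.mem_of_mem_erase hf)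
  have hRmem : ∀ f, f ∈ R ↔ f ≠ s(b, z) ∧ f ≠ s(a, x) ∧ f ∈ F := by
    intro f
    constructor
    · intro hf
      have h2 := Finset.mem_erase.mp hf
      have h1 := Finset.mem_erase.mp h2.2
      exact ⟨h2.1, h1.1, h1.2⟩
    · rintro ⟨h2, h1, hf⟩
      exact Finset.mem_erase.mpr ⟨h2, Finset.mem_erase.mpr ⟨h1, hf⟩⟩
  have hF2E : F2 ⊆ E := by
    intro f hf
    rcases Finset.mem_insert.mp hf with rfl | hf
    · exact habE
    rcases Finset.mem_insert.mp hf with rfl | hf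
    · exact he2E
    · exact hF.1 (hRF hf)
  have hcov : IsCover t F2 := by
    intro w hw
    obtain ⟨g, hg, hgc⟩ := hF.2.1.1 w hw
    have useR : ∀ g', g' ∈ F → g' ≠ s(a, x) → g' ≠ s(b, z) → covers t g' w →
        ∃ f ∈ F2, covers t f w := by
      intro g' hg' h1 h2 hc
      exact ⟨g', Finset.mem_insert.mpr (Or.inr (Finset.mem_insert.mpr (Or.inr
        ((hRmem g').mpr ⟨h2, h1, hg'⟩)))), hc⟩
    have hrepl' : covers t (s(a, x)) w ∨ covers t (s(b, z)) w → ∃ f ∈ F2, covers t f w := by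
      intro h
      rcases hrepl w h with hc | hc | ⟨g', hg', h1, h2, hc⟩
      · exact ⟨s(a, b), Finset.mem_insert_self _ _, hc⟩
      · exact ⟨e2, Finset.mem_insert.mpr (Or.inr (Finset.mem_insert_self _ _)), hc⟩
      · exact useR g' hg' h1 h2 hc
    by_cases hg1 : g = s(a, x)
    · exact hrepl' (Or.inl (hg1 ▸ hgc))
    by_cases hg2 : g = s(b, z)
    · exact hrepl' (Or.inr (hg2 ▸ hgc))
    · exact useR g hg hg1 hg2 hgc
  have hbzR : s(b, z) ∈ F.erase (s(a, x)) := Finset.mem_erase.mpr ⟨fun h => haxbz h.symm, hbzF⟩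
  have hcard : F2.card ≤ F.card := by
    have h1 : R.card = F.card - 2 := by
      rw [hR, Finset.card_erase_of_mem hbzR, Finset.card_erase_of_mem haxF]
      omega
    have h2 : 2 ≤ F.card := by
      have hsub : ({s(a, x), s(b, z)} : Finset (Sym2 V)) ⊆ F := by
        intro f hf
        rcases Finset.mem_insert.mp hf with rfl | hf
        · exact haxF
        · rw [Finset.mem_singleton] at hf; exact hf ▸ hbzF
      have := Finset.card_le_card hsub
      rwa [Finset.card_insert_of_notMem (by simpa using haxbz), Finset.card_singleton] at this
    have h3 : F2.card ≤ (insert e2 R).card + 1 := Finset.card_insert_le _ _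
    have h4 : (insert e2 R).card ≤ R.card + 1 := Finset.card_insert_le _ _
    omega
  have huniq : ∀ f ∈ F2, ∀ c, c ∈ s(a, b) → c ∈ f → f = s(a, b) := by
    intro f hf c hcab hcf
    rcases Finset.mem_insert.mp hf with rfl | hf
    · rfl
    exfalso
    have hcab' : c = a ∨ c = b := Sym2.mem_iff.mp hcab
    rcases Finset.mem_insert.mp hf with rfl | hf
    · have hlc : t.IsLeaf c := by rcases hcab' with rfl | rfl; exacts [hla, hlb]
      have := he2ends c hcf hlc
      rcases hcab' with rfl | rfl
      · exact hza this.symm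
      · exact hzb this.symm
    · obtain ⟨hne2, hne1, hfF⟩ := (hRmem f).mp hf
      rcases hcab' with rfl | rfl
      · exact hne1 (hauniq f hfF hcf)
      · exact hne2 (hbuniq f hfF hcf)
  have hpres : ∀ e ∈ F, IsTwinLinkE t e →
      e ∈ F2 ∧ ∀ f ∈ F2, ∀ c, c ∈ e → c ∈ f → f = e := by
    intro e he htwine
    have hends := twin_ends htwine
    have hene1 : e ≠ s(a, x) := by
      intro h
      exact hxnl (hends x (by rw [h]; simp))
    have hene2 : e ≠ s(b, z) := fun h => hbznt (h ▸ htwine)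
    constructor
    · exact Finset.mem_insert.mpr (Or.inr (Finset.mem_insert.mpr (Or.inr
        ((hRmem e).mpr ⟨hene2, hene1, he⟩))))
    · intro f hf c hce hcf
      have hlc : t.IsLeaf c := hends c hce
      rcases Finset.mem_insert.mp hf with rfl | hf
      · exfalso
        rcases Sym2.mem_iff.mp hcf with rfl | rfl
        · exact hene1 (hauniq e he hce)
        · exact hene2 (hbuniq e he hce)
      rcases Finset.mem_insert.mp hf with rfl | hf
      · exfalso
        have hcz : c = z := he2ends c hcf hlc
        obtain ⟨fz, hfz, hzfz, hzuniq⟩ := leaf_unique_link hnd hF.1 hF.2.1 (hcz ▸ hlc)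
        have h1 := hzuniq e he (hcz ▸ hce)
        have h2 := hzuniq (s(b, z)) hbzF (by simp)
        exact hene2 (h1.trans h2.symm)
      · obtain ⟨_, _, hfF⟩ := (hRmem f).mp hf
        obtain ⟨fc, hfc, hcfc, hfcuniq⟩ := leaf_unique_link hnd hF.1 hF.2.1 hlc
        rw [hfcuniq f hfF hcf, hfcuniq e he hce]
  exact exchange_lemma hnd hsh hF htw habE habF hF2E hcov hcard
    (Finset.mem_insert_self _ _) huniq hpres

end ExchangeSteps


section Exchange33

variable {t : Tree V} {E F : Finset (Sym2 V)}

/-- Exchange removing `ax, bz, b'z'` and adding `ab, e2, e3`. -/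
theorem exchange33 (hnd : ∀ e ∈ E, ¬ e.IsDiag) (hsh : ShadowClosed t E)
    (hF : IsGoodCover t E F)
    {a b x z b' z' : V} (htw : TwinPair t a b) (habE : s(a, b) ∈ E)
    (haxF : s(a, x) ∈ F) (hbzF : s(b, z) ∈ F) (hbz'F : s(b', z') ∈ F)
    (hxnl : ¬ t.IsLeaf x) (hza : z ≠ a) (hlb' : t.IsLeaf b')
    (hb'a : b' ≠ a) (hb'b : b' ≠ b) (hzb' : z ≠ b')
    (hauniq : ∀ g ∈ F, a ∈ g → g = s(a, x))
    (hbuniq : ∀ g ∈ F, b ∈ g → g = s(b, z))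
    (hb'uniq : ∀ g ∈ F, b' ∈ g → g = s(b', z'))
    (hbznt : ¬ IsTwinLinkE t (s(b, z)))
    (hb'znt : ¬ IsTwinLinkE t (s(b', z')))
    {e2 e3 : Sym2 V} (he2E : e2 ∈ E) (he3E : e3 ∈ E)
    (he2ends : ∀ c, c ∈ e2 → t.IsLeaf c → c = z)
    (he3ends : ∀ c, c ∈ e3 → t.IsLeaf c → c = z ∨ c = b')
    (hrepl : ∀ w, covers t (s(a, x)) w ∨ covers t (s(b, z)) w ∨ covers t (s(b', z')) w →
      covers t (s(a, b)) w ∨ covers t e2 w ∨ covers t e3 w) :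
    False := by
  classical
  have hla : t.IsLeaf a := htw.1
  have hlb : t.IsLeaf b := htw.2.1
  have hanb : a ≠ b := htw.2.2.1
  have hxa : x ≠ a := fun h => hxnl (h ▸ hla)
  have hxb : x ≠ b := fun h => hxnl (h ▸ hlb)
  have hxb' : x ≠ b' := fun h => hxnl (h ▸ hlb')
  have hzb : z ≠ b := by
    intro h
    exact hnd _ (hF.1 hbzF) (by rw [h]; exact Sym2.mk_isDiag_iff.mpr rfl)
  have hz'b' : z' ≠ b' := by
    intro h
    exact hnd _ (hF.1 hbz'F) (by rw [h]; exact Sym2.mk_isDiag_iff.mpr rfl)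
  have haxbz : s(a, x) ≠ s(b, z) := by
    intro h
    rcases Sym2.eq_iff.mp h with ⟨h1, _⟩ | ⟨_, h2⟩
    · exact hanb h1
    · exact hxb h2
  have haxbz' : s(a, x) ≠ s(b', z') := by
    intro h
    rcases Sym2.eq_iff.mp h with ⟨h1, _⟩ | ⟨_, h2⟩
    · exact hb'a h1.symm
    · exact hxb' h2
  have hbzbz' : s(b, z) ≠ s(b', z') := by
    intro h
    rcases Sym2.eq_iff.mp h with ⟨h1, _⟩ | ⟨_, h2⟩
    · exact hb'b h1.symm
    · exact hzb' h2
  have habF : s(a, b) ∉ F := by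
    intro h
    have := hauniq _ h (by simp)
    rcases Sym2.eq_iff.mp this with ⟨_, h2⟩ | ⟨h1, _⟩
    · exact hxb h2.symm
    · exact hxa (by rw [← h1])
  set R : Finset (Sym2 V) := ((F.erase (s(a, x))).erase (s(b, z))).erase (s(b', z')) with hR
  set F2 : Finset (Sym2 V) := insert (s(a, b)) (insert e2 (insert e3 R)) with hF2
  have hRF : R ⊆ F := fun f hf =>
    Finset.mem_of_mem_erase (Finset.mem_of_mem_erase (Finset.mem_of_mem_erase hf))
  have hRmem : ∀ f, f ∈ R ↔ f ≠ s(b', z') ∧ f ≠ s(b, z) ∧ f ≠ s(a, x) ∧ f ∈ F := by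
    intro f
    constructor
    · intro hf
      have h3 := Finset.mem_erase.mp hf
      have h2 := Finset.mem_erase.mp h3.2
      have h1 := Finset.mem_erase.mp h2.2
      exact ⟨h3.1, h2.1, h1.1, h1.2⟩
    · rintro ⟨h3, h2, h1, hf⟩
      exact Finset.mem_erase.mpr ⟨h3, Finset.mem_erase.mpr ⟨h2,
        Finset.mem_erase.mpr ⟨h1, hf⟩⟩⟩
  have hF2E : F2 ⊆ E := by
    intro f hf
    rcases Finset.mem_insert.mp hf with rfl | hf
    · exact habE
    rcases Finset.mem_insert.mp hf with rfl | hf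
    · exact he2E
    rcases Finset.mem_insert.mp hf with rfl | hf
    · exact he3E
    · exact hF.1 (hRF hf)
  have habF2 : s(a, b) ∈ F2 := Finset.mem_insert_self _ _
  have he2F2 : e2 ∈ F2 := Finset.mem_insert.mpr (Or.inr (Finset.mem_insert_self _ _))
  have he3F2 : e3 ∈ F2 := Finset.mem_insert.mpr (Or.inr
    (Finset.mem_insert.mpr (Or.inr (Finset.mem_insert_self _ _))))
  have hcov : IsCover t F2 := by
    intro w hw
    obtain ⟨g, hg, hgc⟩ := hF.2.1.1 w hw
    have hrepl' : covers t (s(a, x)) w ∨ covers t (s(b, z)) w ∨ covers t (s(b', z')) w →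
        ∃ f ∈ F2, covers t f w := by
      intro h
      rcases hrepl w h with hc | hc | hc
      · exact ⟨s(a, b), habF2, hc⟩
      · exact ⟨e2, he2F2, hc⟩
      · exact ⟨e3, he3F2, hc⟩
    by_cases hg1 : g = s(a, x)
    · exact hrepl' (Or.inl (hg1 ▸ hgc))
    by_cases hg2 : g = s(b, z)
    · exact hrepl' (Or.inr (Or.inl (hg2 ▸ hgc)))
    by_cases hg3 : g = s(b', z')
    · exact hrepl' (Or.inr (Or.inr (hg3 ▸ hgc)))
    · exact ⟨g, Finset.mem_insert.mpr (Or.inr (Finset.mem_insert.mpr (Or.inr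
        (Finset.mem_insert.mpr (Or.inr ((hRmem g).mpr ⟨hg3, hg2, hg1, hg⟩)))))), hgc⟩
  have hbzR : s(b, z) ∈ F.erase (s(a, x)) :=
    Finset.mem_erase.mpr ⟨fun h => haxbz h.symm, hbzF⟩
  have hbz'R : s(b', z') ∈ (F.erase (s(a, x))).erase (s(b, z)) :=
    Finset.mem_erase.mpr ⟨fun h => hbzbz' h.symm,
      Finset.mem_erase.mpr ⟨fun h => haxbz' h.symm, hbz'F⟩⟩
  have hcard : F2.card ≤ F.card := by
    have h1 : R.card = F.card - 3 := by
      rw [hR, Finset.card_erase_of_mem hbz'R, Finset.card_erase_of_mem hbzR,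
        Finset.card_erase_of_mem haxF]
      omega
    have h2 : 3 ≤ F.card := by
      have hsub : ({s(a, x), s(b, z), s(b', z')} : Finset (Sym2 V)) ⊆ F := by
        intro f hf
        rcases Finset.mem_insert.mp hf with rfl | hf
        · exact haxF
        rcases Finset.mem_insert.mp hf with rfl | hf
        · exact hbzF
        · rw [Finset.mem_singleton] at hf; exact hf ▸ hbz'F
      have hc3 : ({s(a, x), s(b, z), s(b', z')} : Finset (Sym2 V)).card = 3 := by
        rw [Finset.card_insert_of_notMem (by simp [haxbz, haxbz']),
          Finset.card_insert_of_notMem (by simpa using hbzbz'), Finset.card_singleton]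
      have := Finset.card_le_card hsub
      omega
    have h3 : F2.card ≤ (insert e2 (insert e3 R)).card + 1 := Finset.card_insert_le _ _
    have h4 : (insert e2 (insert e3 R)).card ≤ (insert e3 R).card + 1 :=
      Finset.card_insert_le _ _
    have h5 : (insert e3 R).card ≤ R.card + 1 := Finset.card_insert_le _ _
    omega
  have huniq : ∀ f ∈ F2, ∀ c, c ∈ s(a, b) → c ∈ f → f = s(a, b) := by
    intro f hf c hcab hcf
    rcases Finset.mem_insert.mp hf with rfl | hf
    · rfl
    exfalso
    have hcab' : c = a ∨ c = b := Sym2.mem_iff.mp hcab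
    have hlc : t.IsLeaf c := by rcases hcab' with rfl | rfl; exacts [hla, hlb]
    rcases Finset.mem_insert.mp hf with rfl | hf
    · have := he2ends c hcf hlc
      rcases hcab' with rfl | rfl
      · exact hza this.symm
      · exact hzb this.symm
    rcases Finset.mem_insert.mp hf with rfl | hf
    · rcases he3ends c hcf hlc with h | h
      · rcases hcab' with rfl | rfl
        · exact hza h.symm
        · exact hzb h.symm
      · rcases hcab' with rfl | rfl
        · exact hb'a h.symm
        · exact hb'b h.symm
    · obtain ⟨hne3, hne2, hne1, hfF⟩ := (hRmem f).mp hf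
      rcases hcab' with rfl | rfl
      · exact hne1 (hauniq f hfF hcf)
      · exact hne2 (hbuniq f hfF hcf)
  have hpres : ∀ e ∈ F, IsTwinLinkE t e →
      e ∈ F2 ∧ ∀ f ∈ F2, ∀ c, c ∈ e → c ∈ f → f = e := by
    intro e he htwine
    have hends := twin_ends htwine
    have hene1 : e ≠ s(a, x) := by
      intro h; exact hxnl (hends x (by rw [h]; simp))
    have hene2 : e ≠ s(b, z) := fun h => hbznt (h ▸ htwine)
    have hene3 : e ≠ s(b', z') := fun h => hb'znt (h ▸ htwine)
    constructor
    · exact Finset.mem_insert.mpr (Or.inr (Finset.mem_insert.mpr (Or.inr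
        (Finset.mem_insert.mpr (Or.inr ((hRmem e).mpr ⟨hene3, hene2, hene1, he⟩))))))
    · intro f hf c hce hcf
      have hlc : t.IsLeaf c := hends c hce
      have hzcase : c = z → False := by
        intro hcz
        obtain ⟨fz, hfz, hzfz, hzuniq⟩ := leaf_unique_link hnd hF.1 hF.2.1 (hcz ▸ hlc)
        have h1 := hzuniq e he (hcz ▸ hce)
        have h2 := hzuniq (s(b, z)) hbzF (by simp)
        exact hene2 (h1.trans h2.symm)
      have hb'case : c = b' → False := by
        intro hcb'
        exact hene3 (hb'uniq e he (hcb' ▸ hce))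
      rcases Finset.mem_insert.mp hf with rfl | hf
      · exfalso
        rcases Sym2.mem_iff.mp hcf with rfl | rfl
        · exact hene1 (hauniq e he hce)
        · exact hene2 (hbuniq e he hce)
      rcases Finset.mem_insert.mp hf with rfl | hf
      · exact absurd (he2ends c hcf hlc) (fun h => hzcase h)
      rcases Finset.mem_insert.mp hf with rfl | hf
      · exfalso
        rcases he3ends c hcf hlc with h | h
        · exact hzcase h
        · exact hb'case h
      · obtain ⟨_, _, _, hfF⟩ := (hRmem f).mp hf
        obtain ⟨fc, hfc, hcfc, hfcuniq⟩ := leaf_unique_link hnd hF.1 hF.2.1 hlc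
        rw [hfcuniq f hfF hcf, hfcuniq e he hce]
  exact exchange_lemma hnd hsh hF htw habE habF hF2E hcov hcard habF2 huniq hpres

end Exchange33


/-- The master lemma: if `a` is a locked leaf, `s(a,x) ∈ F` with `x` neither a leaf nor a
stem, then `x` is an ancestor of `a` and `x` has a second link of `F` leaving its subtree. -/
theorem locked_master {t : Tree V} {E F : Finset (Sym2 V)}
    (hnd : ∀ e ∈ E, ¬ e.IsDiag) (hsh : ShadowClosed t E) (hF : IsGoodCover t E F)
    {a x : V} (haxF : s(a, x) ∈ F) (halock : IsLockedLeaf t E a)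
    (hxnl : ¬ t.IsLeaf x) (hxns : ¬ IsStem t E x) :
    t.desc x a ∧ ∃ z, s(x, z) ∈ F ∧ ¬ t.desc x z := by
  classical
  obtain ⟨b, b', v, hvroot, hbb'E, hbneb', hb'nea, hleafset, htw, habE, hclosed⟩ := halock
  have hla : t.IsLeaf a := htw.1
  have hlb : t.IsLeaf b := htw.2.1
  have hanb : a ≠ b := htw.2.2.1
  have hset := Set.ext_iff.mp hleafset
  have hva : t.desc v a := by
    have := (hset a).mpr (by simp)
    exact this.2
  have hvb : t.desc v b := ((hset b).mpr (by simp)).2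
  have hvb' : t.desc v b' := ((hset b').mpr (by simp)).2
  have hlb' : t.IsLeaf b' := ((hset b').mpr (by simp)).1
  have hleaves : ∀ y, t.IsLeaf y → t.desc v y → y = a ∨ y = b ∨ y = b' := by
    intro y h1 h2
    have := (hset y).mp ⟨h1, h2⟩
    simpa using this
  obtain ⟨s, hS⟩ := t.exists_lca a b
  have hsa : t.desc s a := hS.1
  have hsb : t.desc s b := hS.2.1
  have hcomm : ∀ w, t.desc w a → t.desc w b → t.desc w s := hS.2.2
  have hcomm' : ∀ w, t.desc w b → t.desc w a → t.desc w s := fun w h1 h2 => hcomm w h2 h1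
  have hvs : t.desc v s := hcomm v hva hvb
  have hsroot : s ≠ t.root := by
    intro h
    exact hvroot (t.eq_root_of_desc_root (h ▸ hvs))
  have hsnl : ¬ t.IsLeaf s := by
    intro h
    exact hanb ((t.eq_of_leaf_desc h hsa).trans (t.eq_of_leaf_desc h hsb).symm)
  have htpath : ∀ y, t.desc s y → t.desc y a ∨ t.desc y b := twin_path htw hS
  have hstem : IsStem t E s := ⟨a, b, htw, habE, hS⟩
  have hxnss : x ≠ s := fun h => hxns (h ▸ hstem)
  have hxa : x ≠ a := fun h => hxnl (h ▸ hla)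
  have hxb : x ≠ b := fun h => hxnl (h ▸ hlb)
  have hxb'ne : x ≠ b' := fun h => hxnl (h ▸ hlb')
  -- unique links at the three leaves
  obtain ⟨fa, hfaF, hafa, hauniq0⟩ := leaf_unique_link hnd hF.1 hF.2.1 hla
  have hfa : fa = s(a, x) := (hauniq0 _ haxF (by simp)).symm
  have hauniq : ∀ g ∈ F, a ∈ g → g = s(a, x) := fun g hg hag => (hauniq0 g hg hag).trans hfa
  obtain ⟨fb, hfbF, hbfb, hbuniq0⟩ := leaf_unique_link hnd hF.1 hF.2.1 hlb
  obtain ⟨z, hfbz⟩ := Sym2.mem_iff_exists.mp hbfb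
  have hbzF : s(b, z) ∈ F := hfbz ▸ hfbF
  have hbuniq : ∀ g ∈ F, b ∈ g → g = s(b, z) := fun g hg hbg => by
    rw [← hfbz]; exact hbuniq0 g hg hbg
  obtain ⟨fb', hfb'F, hb'fb', hb'uniq0⟩ := leaf_unique_link hnd hF.1 hF.2.1 hlb'
  obtain ⟨z', hfbz'⟩ := Sym2.mem_iff_exists.mp hb'fb'
  have hbz'F : s(b', z') ∈ F := hfbz' ▸ hfb'F
  have hb'uniq : ∀ g ∈ F, b' ∈ g → g = s(b', z') := fun g hg hbg => by
    rw [← hfbz']; exact hb'uniq0 g hg hbg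
  have habF : s(a, b) ∉ F := by
    intro h
    have := hauniq _ h (by simp)
    rcases Sym2.eq_iff.mp this with ⟨_, h2⟩ | ⟨h1, _⟩
    · exact hxb h2.symm
    · exact hxa (by rw [← h1])
  have hza : z ≠ a := by
    intro h
    apply habF
    have := hbzF
    rw [h] at this
    rwa [show s(b, a) = s(a, b) from Sym2.eq_swap] at this
  have hzb : z ≠ b := by
    intro h
    exact hnd _ (hF.1 hbzF) (by rw [h]; exact Sym2.mk_isDiag_iff.mpr rfl)
  have haxbz : s(a, x) ≠ s(b, z) := by
    intro h
    rcases Sym2.eq_iff.mp h with ⟨h1, _⟩ | ⟨_, h2⟩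
    · exact hanb h1
    · exact hxb h2
  -- b's only possible twin is a
  have twin_b : ∀ y, (TwinPair t b y ∨ TwinPair t y b) → y = a := by
    intro y hY
    have hly : t.IsLeaf y := by rcases hY with h | h; exacts [h.2.1, h.1]
    have hyb : y ≠ b := by
      rcases hY with h | h
      · exact fun hh => h.2.2.1 hh.symm
      · exact h.2.2.1
    obtain ⟨s2, hS2⟩ := t.exists_lca b y
    have hpath2 : ∀ u, t.desc s2 u → t.desc u b ∨ t.desc u y := by
      rcases hY with h | h
      · exact twin_path h hS2
      · have hS2' : t.IsLCA s2 y b := ⟨hS2.2.1, hS2.1, fun w hw1 hw2 => hS2.2.2 w hw2 hw1⟩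
        intro u hu
        exact (twin_path h hS2' u hu).symm
    rcases t.desc_total_of_desc hS2.1 hsb with hcase | hcase
    · have hs2a : t.desc s2 a := t.desc_trans hcase hsa
      rcases hpath2 a hs2a with h | h
      · exact absurd (t.eq_of_leaf_desc hla h).symm hanb
      · exact t.eq_of_leaf_desc hla h
    · have hsy : t.desc s y := t.desc_trans hcase hS2.2.1
      rcases htpath y hsy with h | h
      · exact (t.eq_of_leaf_desc hly h).symm
      · exact absurd (t.eq_of_leaf_desc hly h).symm hyb
  have hbznt : ¬ IsTwinLinkE t (s(b, z)) := by
    rintro ⟨p, q, hpq, htw2⟩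
    rcases Sym2.eq_iff.mp hpq with ⟨h1, h2⟩ | ⟨h1, h2⟩
    · exact hza (twin_b z (Or.inl (h1 ▸ h2 ▸ htw2)))
    · exact hza (twin_b z (Or.inr (h1 ▸ h2 ▸ htw2)))
  -- the node m = lca(b,b')
  obtain ⟨m, hM⟩ := t.exists_lca b b'
  have hmb : t.desc m b := hM.1
  have hmb' : t.desc m b' := hM.2.1
  have hnsb' : ¬ t.desc s b' := by
    intro h
    rcases htpath b' h with h' | h'
    · exact hb'nea (t.eq_of_leaf_desc hlb' h').symm
    · exact hbneb' (t.eq_of_leaf_desc hlb' h')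
  have hnsm : ¬ t.desc s m := fun h => hnsb' (t.desc_trans h hmb')
  have hms : t.desc m s := by
    rcases t.desc_total_of_desc hmb hsb with h | h
    · exact h
    · exact absurd h hnsm
  have hma : t.desc m a := t.desc_trans hms hsa
  have hMab' : t.IsLCA m a b' := by
    refine ⟨hma, hmb', ?_⟩
    intro w hwa hwb'
    rcases t.desc_total_of_desc hwa hsa with h | h
    · exact hM.2.2 w (t.desc_trans h hsb) hwb'
    · exact absurd (t.desc_trans h hwb') hnsb'
  have hvm : t.desc v m := hM.2.2 v hvb hvb'
  have hmroot : m ≠ t.root := by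
    intro h
    exact hvroot (t.eq_root_of_desc_root (h ▸ hvm))
  -- b' has no twin at all
  have hb'nt : ∀ y, (TwinPair t b' y ∨ TwinPair t y b') → False := by
    intro y hY
    have hly : t.IsLeaf y := by rcases hY with h | h; exacts [h.2.1, h.1]
    have hyb' : y ≠ b' := by
      rcases hY with h | h
      · exact fun hh => h.2.2.1 hh.symm
      · exact h.2.2.1
    obtain ⟨s3, hS3⟩ := t.exists_lca b' y
    have hpath3 : ∀ u, t.desc s3 u → t.desc u b' ∨ t.desc u y := by
      rcases hY with h | h
      · exact twin_path h hS3
      · have hS3' : t.IsLCA s3 y b' := ⟨hS3.2.1, hS3.1, fun w hw1 hw2 => hS3.2.2 w hw2 hw1⟩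
        intro u hu
        exact (twin_path h hS3' u hu).symm
    by_cases hc : t.desc s3 m
    · have h3a : t.desc s3 a := t.desc_trans hc hma
      have h3b : t.desc s3 b := t.desc_trans hc hmb
      rcases hpath3 a h3a with h | h
      · exact hb'nea (t.eq_of_leaf_desc hla h)
      · have hya : y = a := t.eq_of_leaf_desc hla h
        rcases hpath3 b h3b with h2 | h2
        · exact hbneb' (t.eq_of_leaf_desc hlb h2).symm
        · exact hanb (hya.symm.trans (t.eq_of_leaf_desc hlb h2))
    · have hmc : t.desc m s3 := by
        rcases t.desc_total_of_desc hS3.1 hmb' with h | h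
        · exact absurd h hc
        · exact h
      have hvy : t.desc v y := t.desc_trans (t.desc_trans hvm hmc) hS3.2.1
      rcases hleaves y hly hvy with rfl | rfl | rfl
      · exact hc (hMab'.2.2 s3 hS3.2.1 hS3.1)
      · exact hc (hM.2.2 s3 hS3.2.1 hS3.1)
      · exact hyb' rfl
  have hb'znt : ¬ IsTwinLinkE t (s(b', z')) := by
    rintro ⟨p, q, hpq, htw2⟩
    rcases Sym2.eq_iff.mp hpq with ⟨h1, h2⟩ | ⟨h1, h2⟩
    · exact hb'nt z' (Or.inl (h1 ▸ h2 ▸ htw2))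
    · exact hb'nt z' (Or.inr (h1 ▸ h2 ▸ htw2))
  -- every link of E at a stays in T_v
  have hlinks : ∀ y, s(a, y) ∈ E → y ≠ a → t.desc v y := by
    have hSne : (Finset.univ.filter (fun u => u ≠ a ∧ s(a, u) ∈ E)).Nonempty :=
      ⟨x, by simp only [Finset.mem_filter, Finset.mem_univ, true_and]; exact ⟨hxa, hF.1 haxF⟩⟩
    obtain ⟨u0, hu0, hmin⟩ := Finset.exists_min_image _ t.depth hSne
    simp only [Finset.mem_filter, Finset.mem_univ, true_and] at hu0 hmin
    have hup : IsUpLink t E a u0 := by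
      refine ⟨hu0.2, ?_⟩
      intro y hy
      have hyne : y ≠ a := by
        intro h
        exact hnd _ hy (by rw [h]; exact Sym2.mk_isDiag_iff.mpr rfl)
      exact hmin y ⟨hyne, hy⟩
    have hvu0 : t.desc v u0 := hclosed u0 hup
    intro y hyE hyne
    obtain ⟨l, hL⟩ := t.exists_lca a y
    have hlne : l ≠ a := by
      intro h
      exact hyne (t.eq_of_leaf_desc hla (h ▸ hL.2.1))
    have hshadowl : Shadow t (s(l, a)) (s(y, a)) := shadow_gen hL.2.1 hL.2.2
    have halE : s(a, l) ∈ E := by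
      refine hsh (s(a, y)) hyE (s(a, l)) ?_ ?_
      · intro hdg
        rw [Sym2.mk_isDiag_iff] at hdg
        exact hlne hdg.symm
      · rw [show s(a, l) = s(l, a) from Sym2.eq_swap, show s(a, y) = s(y, a) from Sym2.eq_swap]
        exact hshadowl
    have hd1 : t.depth u0 ≤ t.depth l := hup.2 l halE
    have hd2 : t.depth v ≤ t.depth u0 := t.depth_le_of_desc hvu0
    have hvl : t.desc v l := t.desc_of_desc_of_depth_le hva hL.1 (le_trans hd2 hd1)
    exact t.desc_trans hvl hL.2.1
  have hvx : t.desc v x := hlinks x (hF.1 haxF) hxa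
  have hxroot : x ≠ t.root := fun h => hvroot (t.eq_root_of_desc_root (h ▸ hvx))
  have hmnl : ¬ t.IsLeaf m := fun h => hnsm (by
    rw [← t.eq_of_leaf_desc h hms]; exact t.desc_refl s)
  -- generic coverage splits
  have hx_split : ∀ w, covers t (s(a, x)) w → covers t (s(a, b)) w ∨ t.onPath w s x := by
    intro w hc
    rcases onPath_split hsa hcomm (covers_mk.mp hc) with h | h
    · exact Or.inl (covers_mk.mpr h)
    · exact Or.inr h
  have hz_split : ∀ w, covers t (s(b, z)) w → covers t (s(a, b)) w ∨ t.onPath w s z := by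
    intro w hc
    rcases onPath_split hsb hcomm' (covers_mk.mp hc) with h | h
    · exact Or.inl (covers_mk.mpr (t.onPath_symm h))
    · exact Or.inr h
  have hsz_to_ab : t.desc s z → ∀ w, t.onPath w s z → covers t (s(a, b)) w := by
    intro hsz w h
    rcases htpath z hsz with h' | h'
    · exact covers_mk.mpr (onPath_into hsz h' hcomm h)
    · exact covers_mk.mpr (t.onPath_symm (onPath_into hsz h' hcomm' h))
  have hsx_to_ab : t.desc s x → ∀ w, t.onPath w s x → covers t (s(a, b)) w := by
    intro hsx w h
    rcases htpath x hsx with h' | h'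
    · exact covers_mk.mpr (onPath_into hsx h' hcomm h)
    · exact covers_mk.mpr (t.onPath_symm (onPath_into hsx h' hcomm' h))
  -- E-membership of the auxiliary links
  have hsxE : ¬ t.desc s x → s(s, x) ∈ E := by
    intro hsx
    refine hsh (s(a, x)) (hF.1 haxF) _ ?_ ?_
    · intro hdg
      rw [Sym2.mk_isDiag_iff] at hdg
      exact hsx (hdg ▸ t.desc_refl s)
    · refine shadow_gen hsa ?_
      intro w h1 h2
      rcases t.desc_total_of_desc h2 hsa with h | h
      · exact h
      · exact absurd (t.desc_trans h h1) hsx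
  have hszE : ¬ t.desc s z → s(s, z) ∈ E := by
    intro hsz
    refine hsh (s(b, z)) (hF.1 hbzF) _ ?_ ?_
    · intro hdg
      rw [Sym2.mk_isDiag_iff] at hdg
      exact hsz (hdg ▸ t.desc_refl s)
    · refine shadow_gen hsb ?_
      intro w h1 h2
      rcases t.desc_total_of_desc h2 hsb with h | h
      · exact h
      · exact absurd (t.desc_trans h h1) hsz
  have hmb'E : s(m, b') ∈ E := by
    refine hsh (s(b, b')) hbb'E _ ?_ (shadow_gen hmb (fun w h1 h2 => hM.2.2 w h2 h1))
    · intro hdg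
      rw [Sym2.mk_isDiag_iff] at hdg
      exact hbneb' (t.eq_of_leaf_desc hlb' (hdg ▸ hmb))
  -- endpoint conditions
  have hsxends : ∀ c, c ∈ s(s, x) → t.IsLeaf c → c = z := by
    intro c hc hlc
    rcases Sym2.mem_iff.mp hc with rfl | rfl
    · exact absurd hlc hsnl
    · exact absurd hlc hxnl
  have hszends : ∀ c, c ∈ s(s, z) → t.IsLeaf c → c = z := by
    intro c hc hlc
    rcases Sym2.mem_iff.mp hc with rfl | rfl
    · exact absurd hlc hsnl
    · rfl
  have hmb'ends : ∀ c, c ∈ s(m, b') → t.IsLeaf c → c = z ∨ c = b' := by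
    intro c hc hlc
    rcases Sym2.mem_iff.mp hc with rfl | rfl
    · exact absurd hlc hmnl
    · exact Or.inr rfl
  -- PART A : x is an ancestor of a
  have hdxa : t.desc x a := by
    by_contra hnxa
    by_cases hsx : t.desc s x
    · -- x inside T_s
      have hx_ab : ∀ w, covers t (s(a, x)) w → covers t (s(a, b)) w := by
        intro w hc
        rcases hx_split w hc with h | h
        · exact h
        · exact hsx_to_ab hsx w h
      by_cases hsz : t.desc s z
      · exact exchange21 hF habE haxF hbzF haxbz (fun w h => h.elim (hx_ab w)
          (fun hc => (hz_split w hc).elim id (hsz_to_ab hsz w)))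
      · refine exchange22 hnd hsh hF htw habE haxF hbzF hxnl hza hauniq hbuniq hbznt
          (hszE hsz) hszends ?_
        intro w h
        rcases h with hc | hc
        · exact Or.inl (hx_ab w hc)
        · rcases hz_split w hc with h | h
          · exact Or.inl h
          · exact Or.inr (Or.inl (covers_mk.mpr h))
    · -- x on the b'-path
      obtain ⟨lx, hlxleaf, hxlx⟩ := t.exists_leaf_desc hxroot
      have hxb'p : t.desc x b' := by
        rcases hleaves lx hlxleaf (t.desc_trans hvx hxlx) with rfl | rfl | rfl
        · exact absurd hxlx hnxa
        · rcases t.desc_total_of_desc hxlx hsb with h | h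
          · exact absurd (t.desc_trans h hsa) hnxa
          · exact absurd h hsx
        · exact hxlx
      have hmx : t.desc m x := by
        rcases t.desc_total_of_desc hxb'p hmb' with h | h
        · exact absurd (t.desc_trans h hma) hnxa
        · exact h
      by_cases hsz : t.desc s z
      · refine exchange22 hnd hsh hF htw habE haxF hbzF hxnl hza hauniq hbuniq hbznt
          (hsxE hsx) hsxends ?_
        intro w h
        rcases h with hc | hc
        · rcases hx_split w hc with h | h
          · exact Or.inl h
          · exact Or.inr (Or.inl (covers_mk.mpr h))
        · exact Or.inl ((hz_split w hc).elim id (hsz_to_ab hsz w))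
      · by_cases hxz : t.desc x z
        · -- case (0) : z inside T_x
          refine exchange22 hnd hsh hF htw habE haxF hbzF hxnl hza hauniq hbuniq hbznt
            (hszE hsz) hszends ?_
          intro w h
          rcases h with hc | hc
          · rcases hx_split w hc with h | h
            · exact Or.inl h
            · refine Or.inr (Or.inl (covers_mk.mpr ?_))
              rcases h with ⟨h1, h2⟩ | ⟨h1, h2⟩
              · refine Or.inl ⟨h1, fun hwz => ?_⟩
                rcases t.desc_total_of_desc hwz hxz with hh | hh
                · exact h2 hh
                · exact hnxa (t.desc_trans (t.desc_trans hh h1) hsa)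
              · exact Or.inr ⟨t.desc_trans h1 hxz, h2⟩
          · rcases hz_split w hc with h | h
            · exact Or.inl h
            · exact Or.inr (Or.inl (covers_mk.mpr h))
        · by_cases hmz : t.desc m z
          · -- case (0') : z in T_m outside T_s and T_x
            have hzroot : z ≠ t.root := fun h => hmroot (t.eq_root_of_desc_root (h ▸ hmz))
            have hzgeo : t.desc z s ∨ t.desc z b' := by
              obtain ⟨lz, hlzleaf, hzlz⟩ := t.exists_leaf_desc hzroot
              have hvlz : t.desc v lz := t.desc_trans (t.desc_trans hvm hmz) hzlz
              rcases hleaves lz hlzleaf hvlz with rfl | rfl | rfl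
              · rcases t.desc_total_of_desc hzlz hsa with h | h
                · exact Or.inl h
                · exact absurd h hsz
              · rcases t.desc_total_of_desc hzlz hsb with h | h
                · exact Or.inl h
                · exact absurd h hsz
              · exact Or.inr hzlz
            refine exchange22 hnd hsh hF htw habE haxF hbzF hxnl hza hauniq hbuniq hbznt
              (hsxE hsx) hsxends ?_
            intro w h
            rcases h with hc | hc
            · rcases hx_split w hc with h | h
              · exact Or.inl h
              · exact Or.inr (Or.inl (covers_mk.mpr h))
            · rcases covers_mk.mp hc with ⟨h1, h2⟩ | ⟨h1, h2⟩
              · by_cases hws : t.desc w s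
                · refine Or.inr (Or.inl (covers_mk.mpr (Or.inl ⟨hws, fun hwx => ?_⟩)))
                  exact h2 (t.desc_trans (hM.2.2 w h1 (t.desc_trans hwx hxb'p)) hmz)
                · exact Or.inl (covers_mk.mpr (Or.inr ⟨h1, fun hwa => hws (hcomm w hwa h1)⟩))
              · have hnws : ¬ t.desc w s := fun hws => h2 (t.desc_trans hws hsb)
                rcases hzgeo with hg | hg
                · exact absurd (t.desc_trans h1 hg) hnws
                · have hzx : t.desc z x := by
                    rcases t.desc_total_of_desc hg hxb'p with h | h
                    · exact h
                    · exact absurd h hxz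
                  exact Or.inr (Or.inl (covers_mk.mpr (Or.inr ⟨t.desc_trans h1 hzx, hnws⟩)))
          · -- z outside T_m
            have hzb' : z ≠ b' := fun h => hmz (h ▸ hmb')
            by_cases hmz' : t.desc m z'
            · -- C-i-in
              refine exchange33 hnd hsh hF htw habE haxF hbzF hbz'F hxnl hza hlb'
                hb'nea hbneb'.symm hzb' hauniq hbuniq hb'uniq hbznt hb'znt
                (hszE hsz) hmb'E hszends hmb'ends ?_
              intro w h
              rcases h with hc | hc | hc
              · rcases hx_split w hc with h | h
                · exact Or.inl h
                · rcases h with ⟨h1, h2⟩ | ⟨h1, h2⟩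
                  · refine Or.inr (Or.inl (covers_mk.mpr (Or.inl ⟨h1, fun hwz => ?_⟩)))
                    rcases t.desc_total_of_desc h1 hms with hh | hh
                    · exact h2 (t.desc_trans hh hmx)
                    · exact hmz (t.desc_trans hh hwz)
                  · exact Or.inr (Or.inr (covers_mk.mpr (Or.inr
                      ⟨t.desc_trans h1 hxb'p, fun hwm => h2 (t.desc_trans hwm hms)⟩)))
              · rcases hz_split w hc with h | h
                · exact Or.inl h
                · exact Or.inr (Or.inl (covers_mk.mpr h))
              · rcases covers_mk.mp hc with ⟨h1, h2⟩ | ⟨h1, h2⟩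
                · exact Or.inr (Or.inr (covers_mk.mpr (Or.inr
                    ⟨h1, fun hwm => h2 (t.desc_trans hwm hmz')⟩)))
                · have hz'root : z' ≠ t.root :=
                    fun h => hmroot (t.eq_root_of_desc_root (h ▸ hmz'))
                  have hz'geo : t.desc z' a ∨ t.desc z' b ∨ t.desc z' b' := by
                    obtain ⟨lz', hl', hzl'⟩ := t.exists_leaf_desc hz'root
                    rcases hleaves lz' hl' (t.desc_trans (t.desc_trans hvm hmz') hzl') with
                      rfl | rfl | rfl
                    · exact Or.inl hzl'
                    · exact Or.inr (Or.inl hzl')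
                    · exact Or.inr (Or.inr hzl')
                  have hboth : t.desc w a → t.desc w b → covers t (s(s, z)) w := by
                    intro hwa hwb
                    have hws : t.desc w s := hcomm w hwa hwb
                    refine covers_mk.mpr (Or.inl ⟨hws, fun hwz => ?_⟩)
                    rcases t.desc_total_of_desc hws hms with hh | hh
                    · exact h2 (t.desc_trans hh hmb')
                    · exact hmz (t.desc_trans hh hwz)
                  rcases hz'geo with hg | hg | hg
                  · have hwa : t.desc w a := t.desc_trans h1 hg
                    by_cases hwb : t.desc w b
                    · exact Or.inr (Or.inl (hboth hwa hwb))
                    · exact Or.inl (covers_mk.mpr (Or.inl ⟨hwa, hwb⟩))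
                  · have hwb : t.desc w b := t.desc_trans h1 hg
                    by_cases hwa : t.desc w a
                    · exact Or.inr (Or.inl (hboth hwa hwb))
                    · exact Or.inl (covers_mk.mpr (Or.inr ⟨hwb, hwa⟩))
                  · exact absurd (t.desc_trans h1 hg) h2
            · -- C-i-out : keep the link b'z'
              have haxbz' : s(a, x) ≠ s(b', z') := by
                intro h
                rcases Sym2.eq_iff.mp h with ⟨h1, _⟩ | ⟨_, h2⟩
                · exact hb'nea h1.symm
                · exact hxb'ne h2
              have hbzbz' : s(b, z) ≠ s(b', z') := by
                intro h
                rcases Sym2.eq_iff.mp h with ⟨h1, _⟩ | ⟨_, h2⟩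
                · exact hbneb' h1
                · exact hzb' h2
              refine exchange22 hnd hsh hF htw habE haxF hbzF hxnl hza hauniq hbuniq hbznt
                (hszE hsz) hszends ?_
              intro w h
              rcases h with hc | hc
              · rcases hx_split w hc with h | h
                · exact Or.inl h
                · rcases h with ⟨h1, h2⟩ | ⟨h1, h2⟩
                  · refine Or.inr (Or.inl (covers_mk.mpr (Or.inl ⟨h1, fun hwz => ?_⟩)))
                    rcases t.desc_total_of_desc h1 hms with hh | hh
                    · exact h2 (t.desc_trans hh hmx)
                    · exact hmz (t.desc_trans hh hwz)
                  · refine Or.inr (Or.inr ⟨s(b', z'), hbz'F, Ne.symm haxbz',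
                      Ne.symm hbzbz', ?_⟩)
                    refine covers_mk.mpr (Or.inl ⟨t.desc_trans h1 hxb'p, fun hwz' => ?_⟩)
                    rcases t.desc_total_of_desc h1 hmx with hh | hh
                    · exact h2 (t.desc_trans hh hms)
                    · exact hmz' (t.desc_trans hh hwz')
              · rcases hz_split w hc with h | h
                · exact Or.inl h
                · exact Or.inr (Or.inl (covers_mk.mpr h))
  refine ⟨hdxa, ?_⟩
  by_cases hxm : x = m
  · exfalso
    have hsx : ¬ t.desc s x := hxm ▸ hnsm
    by_cases hsz : t.desc s z
    · refine exchange22 hnd hsh hF htw habE haxF hbzF hxnl hza hauniq hbuniq hbznt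
        (hsxE hsx) hsxends ?_
      intro w h
      rcases h with hc | hc
      · rcases hx_split w hc with h | h
        · exact Or.inl h
        · exact Or.inr (Or.inl (covers_mk.mpr h))
      · exact Or.inl ((hz_split w hc).elim id (hsz_to_ab hsz w))
    · by_cases hmz : t.desc m z
      · have hzroot : z ≠ t.root := fun h => hmroot (t.eq_root_of_desc_root (h ▸ hmz))
        have hzgeo : t.desc z s ∨ t.desc z b' := by
          obtain ⟨lz, hlzleaf, hzlz⟩ := t.exists_leaf_desc hzroot
          have hvlz : t.desc v lz := t.desc_trans (t.desc_trans hvm hmz) hzlz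
          rcases hleaves lz hlzleaf hvlz with rfl | rfl | rfl
          · rcases t.desc_total_of_desc hzlz hsa with h | h
            · exact Or.inl h
            · exact absurd h hsz
          · rcases t.desc_total_of_desc hzlz hsb with h | h
            · exact Or.inl h
            · exact absurd h hsz
          · exact Or.inr hzlz
        rcases hzgeo with hzs | hzb'p
        · refine exchange22 hnd hsh hF htw habE haxF hbzF hxnl hza hauniq hbuniq hbznt
            (hsxE hsx) hsxends ?_
          intro w h
          rcases h with hc | hc
          · rcases hx_split w hc with h | h
            · exact Or.inl h
            · exact Or.inr (Or.inl (covers_mk.mpr h))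
          · rcases covers_mk.mp hc with ⟨h1, h2⟩ | ⟨h1, h2⟩
            · by_cases hws : t.desc w s
              · refine Or.inr (Or.inl (covers_mk.mpr (Or.inl ⟨hws, fun hwx => ?_⟩)))
                exact h2 (t.desc_trans (show t.desc w m by rw [← hxm]; exact hwx) hmz)
              · exact Or.inl (covers_mk.mpr (Or.inr ⟨h1, fun hwa => hws (hcomm w hwa h1)⟩))
            · exact absurd (t.desc_trans (t.desc_trans h1 hzs) hsb) h2
        · refine exchange22 hnd hsh hF htw habE haxF hbzF hxnl hza hauniq hbuniq hbznt
            (hszE hsz) hszends ?_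
          intro w h
          rcases h with hc | hc
          · rcases hx_split w hc with h | h
            · exact Or.inl h
            · rcases h with ⟨h1, h2⟩ | ⟨h1, h2⟩
              · refine Or.inr (Or.inl (covers_mk.mpr (Or.inl ⟨h1, fun hwz => ?_⟩)))
                refine h2 (show t.desc w x by
                  rw [hxm]
                  exact hM.2.2 w (t.desc_trans h1 hsb) (t.desc_trans hwz hzb'p))
              · refine Or.inr (Or.inl (covers_mk.mpr (Or.inr ⟨?_, h2⟩)))
                exact t.desc_trans (show t.desc w m by rw [← hxm]; exact h1) hmz
          · rcases hz_split w hc with h | h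
            · exact Or.inl h
            · exact Or.inr (Or.inl (covers_mk.mpr h))
      · refine exchange22 hnd hsh hF htw habE haxF hbzF hxnl hza hauniq hbuniq hbznt
          (hszE hsz) hszends ?_
        intro w h
        rcases h with hc | hc
        · rcases hx_split w hc with h | h
          · exact Or.inl h
          · rcases h with ⟨h1, h2⟩ | ⟨h1, h2⟩
            · refine Or.inr (Or.inl (covers_mk.mpr (Or.inl ⟨h1, fun hwz => ?_⟩)))
              rcases t.desc_total_of_desc h1 hms with hh | hh
              · exact h2 (show t.desc w x by rw [hxm]; exact hh)
              · exact hmz (t.desc_trans hh hwz)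
            · exact absurd (t.desc_trans (show t.desc w m by rw [← hxm]; exact h1) hms) h2
        · rcases hz_split w hc with h | h
          · exact Or.inl h
          · exact Or.inr (Or.inl (covers_mk.mpr h))
  · -- x ≠ m : the covering link of the edge at x must be incident to x
    obtain ⟨f, hfF, hfx⟩ := hF.2.1.1 x hxroot
    have hfne : f ≠ s(a, x) := by
      intro h
      rw [h, covers_mk] at hfx
      rcases hfx with ⟨h1, h2⟩ | ⟨h1, h2⟩
      · exact h2 (t.desc_refl x)
      · exact h2 hdxa
    have key : ∀ c z0, f = s(c, z0) → t.desc x c → ¬ t.desc x z0 →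
        ∃ z1, s(x, z1) ∈ F ∧ ¬ t.desc x z1 := by
      intro c z0 hfcz hxc hnz0
      by_cases hcx : c = x
      · exact ⟨z0, by rw [← hcx, ← hfcz]; exact hfF, hnz0⟩
      exfalso
      have hcroot : c ≠ t.root := by
        intro h
        exact hxroot (t.eq_root_of_desc_root (h ▸ hxc))
      obtain ⟨j, hja, hjc, hxj, hjx⟩ :
          ∃ j, t.desc j a ∧ t.desc j c ∧ t.desc x j ∧ j ≠ x := by
        by_cases hca : t.desc c a
        · exact ⟨c, hca, t.desc_refl c, hxc, hcx⟩
        obtain ⟨lc, hlcleaf, hclc⟩ := t.exists_leaf_desc hcroot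
        have hvlc : t.desc v lc := t.desc_trans (t.desc_trans hvx hxc) hclc
        rcases hleaves lc hlcleaf hvlc with rfl | rfl | rfl
        · exact absurd hclc hca
        · have hsc : t.desc s c := by
            rcases t.desc_total_of_desc hclc hsb with h | h
            · exact absurd (t.desc_trans h hsa) hca
            · exact h
          have hxs : t.desc x s := by
            rcases t.desc_total_of_desc hdxa hsa with h | h
            · exact h
            · exact hcomm x hdxa (t.desc_trans hxc hclc)
          exact ⟨s, hsa, hsc, hxs, hxnss.symm⟩
        · have hmc : t.desc m c := by
            rcases t.desc_total_of_desc hclc hmb' with h | h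
            · exact absurd (t.desc_trans h hma) hca
            · exact h
          have hxm' : t.desc x m := hMab'.2.2 x hdxa (t.desc_trans hxc hclc)
          exact ⟨m, hma, hmc, hxm', fun h => hxm h.symm⟩
      have hproper : ProperShadow t (s(a, j)) (s(a, x)) := by
        refine ⟨?_, j, ?_, ?_⟩
        · intro w hc2
          rw [covers_mk] at hc2; rw [covers_mk]
          rcases hc2 with ⟨h1, h2⟩ | ⟨h1, h2⟩
          · exact Or.inl ⟨h1, fun hwx => h2 (t.desc_trans hwx hxj)⟩
          · exact absurd (t.desc_trans h1 hja) h2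
        · exact covers_mk.mpr (Or.inl ⟨hja, fun h => hjx (t.desc_antisymm h hxj)⟩)
        · intro hc2
          rw [covers_mk] at hc2
          rcases hc2 with ⟨h1, h2⟩ | ⟨h1, h2⟩
          · exact h2 (t.desc_refl j)
          · exact h2 hja
      refine hF.2.1.2.2 (s(a, x)) haxF (s(a, j)) hproper ?_
      intro w hw
      obtain ⟨g, hg, hgc⟩ := hF.2.1.1 w hw
      by_cases hgax : g = s(a, x)
      · rw [hgax, covers_mk] at hgc
        rcases hgc with ⟨h1, h2⟩ | ⟨h1, h2⟩
        · by_cases hwj : t.desc w j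
          · refine ⟨f, Finset.mem_insert.mpr (Or.inr (Finset.mem_erase.mpr ⟨hfne, hfF⟩)), ?_⟩
            rw [hfcz, covers_mk]
            refine Or.inl ⟨t.desc_trans hwj hjc, fun hwz0 => ?_⟩
            rcases t.desc_total_of_desc h1 hdxa with hh | hh
            · exact h2 hh
            · exact hnz0 (t.desc_trans hh hwz0)
          · exact ⟨s(a, j), Finset.mem_insert_self _ _, covers_mk.mpr (Or.inl ⟨h1, hwj⟩)⟩
        · exact ⟨s(a, j), Finset.mem_insert_self _ _,
            covers_mk.mpr (Or.inr ⟨t.desc_trans h1 hxj, h2⟩)⟩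
      · exact ⟨g, Finset.mem_insert.mpr (Or.inr (Finset.mem_erase.mpr ⟨hgax, hg⟩)), hgc⟩
    obtain ⟨p, q, hpq, hop⟩ := hfx
    rcases hop with ⟨h1, h2⟩ | ⟨h1, h2⟩
    · exact key p q hpq h1 h2
    · exact key q p (hpq.trans Sym2.eq_swap) h1 h2

/-- for an arbitrary link set `I` and an original node `x ∈ X` of `T/I`, if
`e = a'x ∈ F` with the original endpoint `a` of `e` a locked leaf, then `a'` lies in the
subtree of `T/I` rooted at `x`, and there is a link `xz ∈ F` with `z ∉ T_x` and `z` not a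
locked leaf (so `x` has a ticket for `xz`). -/
theorem locked_endpoint_ticket (t : Tree V) (E F : Finset (Sym2 V))
    (hnd : ∀ e ∈ E, ¬ e.IsDiag) (hsh : ShadowClosed t E) (hEcov : IsCover t E)
    (hF : IsGoodCover t E F)
    (I : Finset (Sym2 V)) (x a : V)
    (hxorig : ¬ qcompoundRep t I x) (hxX : x ∈ Xset t E)
    (haF : s(a, x) ∈ F) (halock : IsLockedLeaf t E a) :
    qdescRep t I x a ∧
      ∃ z : V, s(x, z) ∈ F ∧ ¬ qdescRep t I x z ∧ ¬ IsLockedLeaf t E z := by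
  obtain ⟨-, hxnl, hxns⟩ := Finset.mem_filter.mp hxX
  have hnrel : ∀ w, rel t I w x → w = x := by
    intro w h
    by_contra hne
    exact hxorig (Or.inl ⟨w, hne, rel_symm' h⟩)
  have hqdesc : ∀ y, qdescRep t I x y ↔ t.desc x y := by
    intro y
    constructor
    · rintro ⟨w, hw1, hw2⟩
      exact hnrel w hw2 ▸ hw1
    · intro h
      exact ⟨x, h, rel_refl' x⟩
  obtain ⟨hdxa, z, hxzF, hnxz⟩ := locked_master hnd hsh hF haF halock hxnl hxns
  refine ⟨(hqdesc a).mpr hdxa, z, hxzF, fun h => hnxz ((hqdesc z).mp h), ?_⟩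
  intro hzlock
  have hzxF : s(z, x) ∈ F := by
    rw [show s(z, x) = s(x, z) from Sym2.eq_swap]
    exact hxzF
  exact hnxz (locked_master hnd hsh hF hzxF hzlock hxnl hxns).1

end TAP
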